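/- Let G be a group. If G is shortcut, then G admits a finite presentation with an exponential isoperimetric function (there are constants A, B > 0 such that f(n) = A·B^n is an isoperimetric function). If G is strongly shortcut, then G admits a finite presentation with a polynomial isoperimetric function (there are constants A, d > 0 such that f(n) = A·n^d is an isoperimetric function). -/

import Mathlib

open scoped Classical

noncomputable section

namespace ShortcutGraphs

/-- Path metric on (the geometric realization of) the cycle graph `C` with `n` edges:
points of `C` are parametrized by `ℝ` modulo `n`, with each edge isometric to `[0,1]`. -/
def cdist (n : ℕ) (p q : ℝ) : ℝ := ⨅ k : ℤ, |p - q + k * (n : ℝ)|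

variable {V : Type*}

/-- A cycle of length `n` in the simplicial graph `G`: a nondegenerate combinatorial map
from the cycle graph with `n` edges, recorded by the images of its vertices `0, 1, …, n-1`
(indexed by `ZMod n`); consecutive vertices map to adjacent vertices of `G`. -/
def IsCycle (G : SimpleGraph V) (n : ℕ) (c : ZMod n → V) : Prop :=
  ∀ i : ZMod n, G.Adj (c i) (c (i + 1))

/-- Distance, in the geometric realization of the graph `G` (each edge isometric to `[0,1]`,
equipped with the path metric), between the images under the cycle `c` of the points of the
cycle graph parametrized by `p` and `q`.  The point parametrized by `p` lies on the edge of
the cycle joining vertex `⌊p⌋` to vertex `⌊p⌋ + 1`, at distance `p - ⌊p⌋` from the former; a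
geodesic between two points of a graph either stays within one closed edge (the `if` terms)
or consists of a piece of an edge, a geodesic between two vertices, and a piece of an edge
(the `route` term). -/
def rdist (G : SimpleGraph V) (n : ℕ) (c : ZMod n → V) (p q : ℝ) : ℝ :=
  let i : ZMod n := ((⌊p⌋ : ℤ) : ZMod n)
  let j : ZMod n := ((⌊q⌋ : ℤ) : ZMod n)
  let s : ℝ := Int.fract p
  let t : ℝ := Int.fract q
  let a : V := c i
  let b : V := c (i + 1)
  let u : V := c j
  let v : V := c (j + 1)
  let route : ℝ :=
    min (min (s + (G.dist a u : ℝ) + t) (s + (G.dist a v : ℝ) + (1 - t)))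
        (min ((1 - s) + (G.dist b u : ℝ) + t) ((1 - s) + (G.dist b v : ℝ) + (1 - t)))
  min route
    (min (if a = u ∧ b = v then |s - t| else route)
         (if a = v ∧ b = u then |s + t - 1| else route))

/-- Two points of the cycle graph with `n` edges are antipodal if their distance is `n/2`. -/
def Antipodal (n : ℕ) (p q : ℝ) : Prop := cdist n p q = (n : ℝ) / 2

/-- The cycle `c` is isometric: it is an isometric embedding at the level of all points of
the geometric realizations. -/
def IsIsometricCycle (G : SimpleGraph V) (n : ℕ) (c : ZMod n → V) : Prop :=
  ∀ p q : ℝ, rdist G n c p q = cdist n p q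

/-- The cycle `c` is `ξ`-almost isometric: `d_Γ(f(p), f(q)) ≥ ξ·|C|/2` for every antipodal
pair of points `p, q` of the cycle. -/
def IsAlmostIsometricCycle (G : SimpleGraph V) (n : ℕ) (c : ZMod n → V) (ξ : ℝ) : Prop :=
  ∀ p q : ℝ, Antipodal n p q → ξ * ((n : ℝ) / 2) ≤ rdist G n c p q

/-- A graph is shortcut if there is a bound `θ` on the lengths of its isometric cycles. -/
def Shortcut (G : SimpleGraph V) : Prop :=
  ∃ θ : ℕ, ∀ (n : ℕ) (c : ZMod n → V), 0 < n → IsCycle G n c → IsIsometricCycle G n c → n ≤ θ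

/-- A graph is strongly shortcut if for some `ξ ∈ (0,1)` there is a bound `θ` on the lengths
of its `ξ`-almost isometric cycles. -/
def StronglyShortcut (G : SimpleGraph V) : Prop :=
  ∃ (θ : ℕ) (ξ : ℝ), 0 < ξ ∧ ξ < 1 ∧
    ∀ (n : ℕ) (c : ZMod n → V), 0 < n → IsCycle G n c → IsAlmostIsometricCycle G n c ξ → n ≤ θ

/-- The group `Gp` acts on the graph `G` by graph automorphisms, via the permutation
representation `ρ`. -/
def IsGraphAction (Gp : Type) [Group Gp] {V : Type} (G : SimpleGraph V)
    (ρ : Gp →* Equiv.Perm V) : Prop :=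
  ∀ (g : Gp) (u v : V), G.Adj (ρ g u) (ρ g v) ↔ G.Adj u v

/-- The action is proper: all vertex stabilizers are finite. -/
def ProperAction (Gp : Type) [Group Gp] {V : Type} (ρ : Gp →* Equiv.Perm V) : Prop :=
  ∀ v : V, {g : Gp | ρ g v = v}.Finite

/-- The action is cocompact: there are finitely many orbits of vertices and of edges. -/
def CocompactAction (Gp : Type) [Group Gp] {V : Type} (G : SimpleGraph V)
    (ρ : Gp →* Equiv.Perm V) : Prop :=
  (∃ V₀ : Finset V, ∀ v : V, ∃ g : Gp, ∃ v₀ ∈ V₀, ρ g v₀ = v) ∧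
  (∃ E₀ : Finset (V × V), ∀ u v : V, G.Adj u v →
      ∃ g : Gp, ∃ e ∈ E₀, ρ g e.1 = u ∧ ρ g e.2 = v)

/-- The action is free: no nontrivial element fixes a vertex. -/
def FreeAction (Gp : Type) [Group Gp] {V : Type} (ρ : Gp →* Equiv.Perm V) : Prop :=
  ∀ g : Gp, g ≠ 1 → ∀ v : V, ρ g v ≠ v

/-- A group is shortcut if it acts properly and cocompactly on a shortcut graph
(a connected simplicial graph with a bound on the lengths of its isometric cycles). -/
def ShortcutGroup (Gp : Type) [Group Gp] : Prop :=
  ∃ (V : Type) (G : SimpleGraph V) (ρ : Gp →* Equiv.Perm V),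
    G.Connected ∧ IsGraphAction Gp G ρ ∧ ProperAction Gp ρ ∧
      CocompactAction Gp G ρ ∧ Shortcut G

/-- A group is strongly shortcut if it acts properly and cocompactly on a strongly shortcut
graph. -/
def StronglyShortcutGroup (Gp : Type) [Group Gp] : Prop :=
  ∃ (V : Type) (G : SimpleGraph V) (ρ : Gp →* Equiv.Perm V),
    G.Connected ∧ IsGraphAction Gp G ρ ∧ ProperAction Gp ρ ∧
      CocompactAction Gp G ρ ∧ StronglyShortcut G

/-- `f` is an isoperimetric function for the finite presentation with `k` generators and
relator set `rels`: every word of length at most `N` in the generators which represents the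
identity of the presented group (i.e. lies in the normal closure of the relators) is equal,
in the free group, to a product of at most `f N` conjugates of relators and their inverses. -/
def IsIsoperimetricFn {k : ℕ} (rels : Finset (FreeGroup (Fin k))) (f : ℕ → ℕ) : Prop :=
  ∀ (N : ℕ) (w : FreeGroup (Fin k)), (FreeGroup.toWord w).length ≤ N →
    w ∈ Subgroup.normalClosure (rels : Set (FreeGroup (Fin k))) →
    ∃ L : List (FreeGroup (Fin k)), L.length ≤ f N ∧
      (∀ x ∈ L, ∃ (g r : FreeGroup (Fin k)), r ∈ rels ∧
        (x = g * r * g⁻¹ ∨ x = g * r⁻¹ * g⁻¹)) ∧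
      L.prod = w
def circ (n : ℕ) (x : ℝ) : ℝ := |x - round (x / (n:ℝ)) * (n:ℝ)|

variable {n : ℕ}

lemma circ_le (hn : 0 < n) (x : ℝ) (k : ℤ) : circ n x ≤ |x - k * (n:ℝ)| := by
  have hn' : (0:ℝ) < n := by exact_mod_cast hn
  have h := round_le (x / (n:ℝ)) k
  have e1 : x - round (x / (n:ℝ)) * n = (x / n - round (x / (n:ℝ))) * n := by
    field_simp
  have e2 : x - k * (n:ℝ) = (x / n - k) * n := by field_simp
  rw [circ, e1, e2, abs_mul, abs_mul, abs_of_pos hn']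
  exact mul_le_mul_of_nonneg_right h hn'.le

lemma circ_nonneg (x : ℝ) : 0 ≤ circ n x := abs_nonneg _

lemma circ_le_abs (hn : 0 < n) (x : ℝ) : circ n x ≤ |x| := by
  simpa using circ_le hn x 0

lemma circ_le_half (hn : 0 < n) (x : ℝ) : circ n x ≤ (n:ℝ) / 2 := by
  have hn' : (0:ℝ) < n := by exact_mod_cast hn
  have h := abs_sub_round (x / (n:ℝ))
  have e1 : x - round (x / (n:ℝ)) * n = (x / n - round (x / (n:ℝ))) * n := by field_simp
  rw [circ, e1, abs_mul, abs_of_pos hn']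
  calc |x / n - (round (x / (n:ℝ)) : ℝ)| * n ≤ (1/2) * n :=
        mul_le_mul_of_nonneg_right h hn'.le
    _ = (n:ℝ)/2 := by ring

lemma cdist_eq_circ (hn : 0 < n) (p q : ℝ) : cdist n p q = circ n (p - q) := by
  have hbdd : BddBelow (Set.range fun k : ℤ => |p - q + k * (n:ℝ)|) := by
    refine ⟨0, ?_⟩
    rintro y ⟨k, rfl⟩
    exact abs_nonneg _
  rw [cdist]
  refine le_antisymm ?_ ?_
  · refine le_trans (ciInf_le hbdd (-(round ((p - q) / (n:ℝ))))) (le_of_eq ?_)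
    rw [circ]
    congr 1
    push_cast
    ring
  · refine le_ciInf fun k => ?_
    refine le_trans (circ_le hn (p - q) (-k)) (le_of_eq ?_)
    congr 1; push_cast; ring

lemma circ_triangle (hn : 0 < n) (x y : ℝ) : circ n (x + y) ≤ circ n x + circ n y := by
  set rx := round (x / (n:ℝ))
  set ry := round (y / (n:ℝ))
  calc circ n (x + y) ≤ |x + y - (rx + ry : ℤ) * (n:ℝ)| := circ_le hn _ _
    _ = |(x - rx * n) + (y - ry * n)| := by congr 1; push_cast; ring
    _ ≤ |x - rx * n| + |y - ry * n| := abs_add_le _ _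
    _ = circ n x + circ n y := rfl

lemma circ_neg (hn : 0 < n) (x : ℝ) : circ n (-x) = circ n x := by
  refine le_antisymm ?_ ?_
  · refine le_trans (circ_le hn (-x) (-(round (x / (n:ℝ))))) (le_of_eq ?_)
    rw [circ, ← abs_neg]; congr 1; push_cast; ring
  · refine le_trans (circ_le hn x (-(round ((-x) / (n:ℝ))))) (le_of_eq ?_)
    rw [circ, ← abs_neg]; congr 1; push_cast; ring

lemma circ_sub_le (hn : 0 < n) (x y : ℝ) : circ n x - circ n y ≤ |x - y| := by
  have := circ_triangle hn y (x - y)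
  have h2 : circ n (x - y) ≤ |x - y| := circ_le_abs hn _
  have e : y + (x - y) = x := by ring
  rw [e] at this
  linarith

lemma circ_lipschitz (hn : 0 < n) (x y : ℝ) : |circ n x - circ n y| ≤ |x - y| := by
  rw [abs_sub_le_iff]
  constructor
  · exact circ_sub_le hn x y
  · have := circ_sub_le hn y x
    rwa [abs_sub_comm] at this

lemma circ_add_int_mul (hn : 0 < n) (x : ℝ) (k : ℤ) : circ n (x + k * n) = circ n x := by
  refine le_antisymm ?_ ?_
  · calc circ n (x + k * n) ≤ |(x + k * n) - ((round (x / (n:ℝ)) + k : ℤ)) * n| :=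
        circ_le hn _ _
      _ = |x - round (x / (n:ℝ)) * n| := by congr 1; push_cast; ring
  · calc circ n x ≤ |x - ((round ((x + k*n) / (n:ℝ)) - k : ℤ)) * n| := circ_le hn _ _
      _ = |(x + k * n) - round ((x + k*n) / (n:ℝ)) * n| := by congr 1; push_cast; ring

lemma circ_int_min (hn : 0 < n) (m : ℤ) (h0 : 0 ≤ m) (h1 : m ≤ n) :
    circ n m = min (m : ℝ) ((n:ℝ) - m) := by
  have hn' : (0:ℝ) < n := by exact_mod_cast hn
  refine le_antisymm ?_ ?_
  · refine le_min ?_ ?_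
    · calc circ n m ≤ |(m:ℝ) - (0:ℤ) * n| := circ_le hn _ _
        _ = (m:ℝ) := by
            push_cast
            rw [abs_of_nonneg]
            · ring
            · simp only [zero_mul, sub_zero]
              exact_mod_cast h0
    · calc circ n m ≤ |(m:ℝ) - (1:ℤ) * n| := circ_le hn _ _
        _ = (n:ℝ) - m := by
            push_cast
            rw [abs_of_nonpos] <;> push_cast <;>
              [skip; skip] <;> nlinarith [ (show (m:ℝ) ≤ n by exact_mod_cast h1)]
  · set r := round ((m:ℝ) / (n:ℝ)) with hr
    have hm : (0:ℝ) ≤ m := by exact_mod_cast h0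
    have hmn : (m:ℝ) ≤ n := by exact_mod_cast h1
    rcases le_or_gt r 0 with hr0 | hr0
    · have : (m:ℝ) ≤ m - r * n := by nlinarith [(show (r:ℝ) ≤ 0 by exact_mod_cast hr0)]
      calc min (m:ℝ) ((n:ℝ) - m) ≤ (m:ℝ) := min_le_left _ _
        _ ≤ m - r * n := this
        _ ≤ |(m:ℝ) - r * n| := le_abs_self _
    · have h1r : (1:ℝ) ≤ r := by exact_mod_cast hr0
      have : (n:ℝ) - m ≤ -( (m:ℝ) - r * n) := by nlinarith
      calc min (m:ℝ) ((n:ℝ) - m) ≤ (n:ℝ) - m := min_le_right _ _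
        _ ≤ -((m:ℝ) - r * n) := this
        _ ≤ |(m:ℝ) - r * n| := neg_le_abs _

lemma circ_eq_zero_iff (hn : 0 < n) (x : ℝ) : circ n x = 0 ↔ ∃ k : ℤ, x = k * n := by
  constructor
  · intro h
    exact ⟨round (x / (n:ℝ)), by have := abs_eq_zero.mp h; linarith⟩
  · rintro ⟨k, rfl⟩
    have : circ n ((k:ℝ) * n) ≤ |(k:ℝ) * n - k * n| := circ_le hn _ _
    simp at this
    exact le_antisymm (by simpa using this) (circ_nonneg _)

variable {V : Type*}

lemma rdist_eq (G : SimpleGraph V) (n : ℕ) (c : ZMod n → V) (p q : ℝ) :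
    rdist G n c p q =
      min (min (min (Int.fract p + (G.dist (c ((⌊p⌋ : ℤ) : ZMod n)) (c ((⌊q⌋ : ℤ) : ZMod n)) : ℝ) + Int.fract q)
                   (Int.fract p + (G.dist (c ((⌊p⌋ : ℤ) : ZMod n)) (c (((⌊q⌋ : ℤ) : ZMod n) + 1)) : ℝ) + (1 - Int.fract q)))
              (min ((1 - Int.fract p) + (G.dist (c (((⌊p⌋ : ℤ) : ZMod n) + 1)) (c ((⌊q⌋ : ℤ) : ZMod n)) : ℝ) + Int.fract q)
                   ((1 - Int.fract p) + (G.dist (c (((⌊p⌋ : ℤ) : ZMod n) + 1)) (c (((⌊q⌋ : ℤ) : ZMod n) + 1)) : ℝ) + (1 - Int.fract q))))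
        (min (if c ((⌊p⌋ : ℤ) : ZMod n) = c ((⌊q⌋ : ℤ) : ZMod n) ∧ c (((⌊p⌋ : ℤ) : ZMod n) + 1) = c (((⌊q⌋ : ℤ) : ZMod n) + 1)
              then |Int.fract p - Int.fract q|
              else min (min (Int.fract p + (G.dist (c ((⌊p⌋ : ℤ) : ZMod n)) (c ((⌊q⌋ : ℤ) : ZMod n)) : ℝ) + Int.fract q)
                   (Int.fract p + (G.dist (c ((⌊p⌋ : ℤ) : ZMod n)) (c (((⌊q⌋ : ℤ) : ZMod n) + 1)) : ℝ) + (1 - Int.fract q)))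
              (min ((1 - Int.fract p) + (G.dist (c (((⌊p⌋ : ℤ) : ZMod n) + 1)) (c ((⌊q⌋ : ℤ) : ZMod n)) : ℝ) + Int.fract q)
                   ((1 - Int.fract p) + (G.dist (c (((⌊p⌋ : ℤ) : ZMod n) + 1)) (c (((⌊q⌋ : ℤ) : ZMod n) + 1)) : ℝ) + (1 - Int.fract q))))
             (if c ((⌊p⌋ : ℤ) : ZMod n) = c (((⌊q⌋ : ℤ) : ZMod n) + 1) ∧ c (((⌊p⌋ : ℤ) : ZMod n) + 1) = c ((⌊q⌋ : ℤ) : ZMod n)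
              then |Int.fract p + Int.fract q - 1|
              else min (min (Int.fract p + (G.dist (c ((⌊p⌋ : ℤ) : ZMod n)) (c ((⌊q⌋ : ℤ) : ZMod n)) : ℝ) + Int.fract q)
                   (Int.fract p + (G.dist (c ((⌊p⌋ : ℤ) : ZMod n)) (c (((⌊q⌋ : ℤ) : ZMod n) + 1)) : ℝ) + (1 - Int.fract q)))
              (min ((1 - Int.fract p) + (G.dist (c (((⌊p⌋ : ℤ) : ZMod n) + 1)) (c ((⌊q⌋ : ℤ) : ZMod n)) : ℝ) + Int.fract q)
                   ((1 - Int.fract p) + (G.dist (c (((⌊p⌋ : ℤ) : ZMod n) + 1)) (c (((⌊q⌋ : ℤ) : ZMod n) + 1)) : ℝ) + (1 - Int.fract q))))) := rfl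

/-- The realization distance is at least the minimum of the four corner distances. -/
lemma min4_le_rdist (G : SimpleGraph V) (n : ℕ) (c : ZMod n → V) (p q : ℝ) :
    min (min (G.dist (c ((⌊p⌋ : ℤ) : ZMod n)) (c ((⌊q⌋ : ℤ) : ZMod n)) : ℝ)
             (G.dist (c ((⌊p⌋ : ℤ) : ZMod n)) (c (((⌊q⌋ : ℤ) : ZMod n) + 1)) : ℝ))
        (min (G.dist (c (((⌊p⌋ : ℤ) : ZMod n) + 1)) (c ((⌊q⌋ : ℤ) : ZMod n)) : ℝ)
             (G.dist (c (((⌊p⌋ : ℤ) : ZMod n) + 1)) (c (((⌊q⌋ : ℤ) : ZMod n) + 1)) : ℝ))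
      ≤ rdist G n c p q := by
  rw [rdist_eq]
  set i : ZMod n := ((⌊p⌋ : ℤ) : ZMod n)
  set j : ZMod n := ((⌊q⌋ : ℤ) : ZMod n)
  set s : ℝ := Int.fract p with hs
  set t : ℝ := Int.fract q with ht
  have hs0 : 0 ≤ s := Int.fract_nonneg p
  have hs1 : s < 1 := Int.fract_lt_one p
  have ht0 : 0 ≤ t := Int.fract_nonneg q
  have ht1 : t < 1 := Int.fract_lt_one q
  set dau : ℝ := (G.dist (c i) (c j) : ℝ) with hdau
  set dav : ℝ := (G.dist (c i) (c (j + 1)) : ℝ) with hdav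
  set dbu : ℝ := (G.dist (c (i + 1)) (c j) : ℝ) with hdbu
  set dbv : ℝ := (G.dist (c (i + 1)) (c (j + 1)) : ℝ) with hdbv
  have m4au : min (min dau dav) (min dbu dbv) ≤ dau := le_trans (min_le_left _ _) (min_le_left _ _)
  have m4av : min (min dau dav) (min dbu dbv) ≤ dav := le_trans (min_le_left _ _) (min_le_right _ _)
  have m4bu : min (min dau dav) (min dbu dbv) ≤ dbu := le_trans (min_le_right _ _) (min_le_left _ _)
  have m4bv : min (min dau dav) (min dbu dbv) ≤ dbv := le_trans (min_le_right _ _) (min_le_right _ _)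
  have hroute : min (min dau dav) (min dbu dbv) ≤
      min (min (s + dau + t) (s + dav + (1 - t))) (min ((1 - s) + dbu + t) ((1 - s) + dbv + (1 - t))) := by
    refine le_min (le_min ?_ ?_) (le_min ?_ ?_) <;> [linarith; linarith; linarith; linarith]
  refine le_min hroute (le_min ?_ ?_)
  · split_ifs with h
    · have : dau = 0 := by rw [hdau, h.1]; simp
      calc min (min dau dav) (min dbu dbv) ≤ dau := m4au
        _ = 0 := this
        _ ≤ |s - t| := abs_nonneg _
    · exact hroute
  · split_ifs with h
    · have : dav = 0 := by rw [hdav, h.1]; simp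
      calc min (min dau dav) (min dbu dbv) ≤ dav := m4av
        _ = 0 := this
        _ ≤ |s + t - 1| := abs_nonneg _
    · exact hroute

section IsoCore

variable {G : SimpleGraph V} {n : ℕ} {c : ZMod n → V}

private lemma castsucc (n : ℕ) (x : ℤ) : (((x + 1 : ℤ)) : ZMod n) = ((x : ZMod n)) + 1 := by
  push_cast; ring

/-- combinatorially isometric cycles are isometric. -/
lemma isometric_of_vertex_iso (hn3 : 3 ≤ n)
    (hvi : ∀ x y : ℤ, (G.dist (c ((x : ZMod n))) (c ((y : ZMod n))) : ℝ)
      = circ n ((x : ℝ) - (y : ℝ))) :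
    IsIsometricCycle G n c := by
  have hn : 0 < n := by omega
  have hn' : (0:ℝ) < n := by exact_mod_cast hn
  have hn3' : (3:ℝ) ≤ n := by exact_mod_cast hn3
  intro p q
  rw [cdist_eq_circ hn, rdist_eq]
  set i : ℤ := ⌊p⌋ with hi
  set j : ℤ := ⌊q⌋ with hj
  set s : ℝ := Int.fract p with hsdef
  set t : ℝ := Int.fract q with htdef
  have hs0 : 0 ≤ s := Int.fract_nonneg p
  have hs1 : s < 1 := Int.fract_lt_one p
  have ht0 : 0 ≤ t := Int.fract_nonneg q
  have ht1 : t < 1 := Int.fract_lt_one q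
  have hps : (i:ℝ) + s = p := Int.floor_add_fract p
  have hqt : (j:ℝ) + t = q := Int.floor_add_fract q
  set K : ℤ := round ((p - q) / (n:ℝ)) with hK
  set δ : ℝ := (p - q) - K * n with hδ
  have hcirc : circ n (p - q) = |δ| := by rw [hδ, hK]; rfl
  set D : ℤ := i - j - K * n with hDdef
  have hδD : δ = ((D:ℤ):ℝ) + (s - t) := by
    rw [hδ, hDdef]; push_cast; linarith
  have habs : |δ| ≤ (n:ℝ)/2 := hcirc ▸ circ_le_half hn (p - q)
  -- corner identities
  have hdau : (G.dist (c ((i : ZMod n))) (c ((j : ZMod n))) : ℝ) = circ n ((i:ℝ) - j) := hvi i j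
  have hdav : (G.dist (c ((i : ZMod n))) (c (((j : ZMod n)) + 1)) : ℝ)
      = circ n ((i:ℝ) - j - 1) := by
    rw [← castsucc n j, hvi i (j+1)]; push_cast; ring_nf
  have hdbu : (G.dist (c (((i : ZMod n)) + 1)) (c ((j : ZMod n))) : ℝ)
      = circ n ((i:ℝ) - j + 1) := by
    rw [← castsucc n i, hvi (i+1) j]; push_cast; ring_nf
  have hdbv : (G.dist (c (((i : ZMod n)) + 1)) (c (((j : ZMod n)) + 1)) : ℝ)
      = circ n ((i:ℝ) - j) := by
    rw [← castsucc n i, ← castsucc n j, hvi (i+1) (j+1)]; push_cast; ring_nf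
  have zero_au : c ((i : ZMod n)) = c ((j : ZMod n)) → circ n ((i:ℝ) - j) = 0 := by
    intro h
    rw [← hdau, h]
    simp
  have zero_av : c ((i : ZMod n)) = c (((j : ZMod n)) + 1) → circ n ((i:ℝ) - j - 1) = 0 := by
    intro h
    rw [← hdav, h]
    simp
  have zero_bu : c (((i : ZMod n)) + 1) = c ((j : ZMod n)) → circ n ((i:ℝ) - j + 1) = 0 := by
    intro h
    rw [← hdbu, h]
    simp
  set dau : ℝ := (G.dist (c ((i : ZMod n))) (c ((j : ZMod n))) : ℝ)
  set dav : ℝ := (G.dist (c ((i : ZMod n))) (c (((j : ZMod n)) + 1)) : ℝ)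
  set dbu : ℝ := (G.dist (c (((i : ZMod n)) + 1)) (c ((j : ZMod n))) : ℝ)
  set dbv : ℝ := (G.dist (c (((i : ZMod n)) + 1)) (c (((j : ZMod n)) + 1)) : ℝ)
  have hcs : circ n s ≤ s := le_trans (circ_le_abs hn s) (le_of_eq (abs_of_nonneg hs0))
  have hct : circ n t ≤ t := le_trans (circ_le_abs hn t) (le_of_eq (abs_of_nonneg ht0))
  have hcs1 : circ n (1 - s) ≤ 1 - s :=
    le_trans (circ_le_abs hn _) (le_of_eq (abs_of_nonneg (by linarith)))
  have hct1 : circ n (1 - t) ≤ 1 - t :=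
    le_trans (circ_le_abs hn _) (le_of_eq (abs_of_nonneg (by linarith)))
  -- route lower bounds
  have hT1 : |δ| ≤ s + dau + t := by
    have h1 := circ_triangle hn (s + ((i:ℝ) - j)) (-t)
    have h2 := circ_triangle hn s ((i:ℝ) - j)
    have e : s + ((i:ℝ) - j) + -t = p - q := by linarith
    rw [e] at h1
    have h3 : circ n (-t) = circ n t := circ_neg hn t
    rw [hdau]
    rw [hcirc] at h1
    linarith
  have hT2 : |δ| ≤ s + dav + (1 - t) := by
    have h1 := circ_triangle hn (s + ((i:ℝ) - j - 1)) (1 - t)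
    have h2 := circ_triangle hn s ((i:ℝ) - j - 1)
    have e : s + ((i:ℝ) - j - 1) + (1 - t) = p - q := by linarith
    rw [e] at h1
    rw [hdav]
    rw [hcirc] at h1
    linarith
  have hT3 : |δ| ≤ (1 - s) + dbu + t := by
    have h1 := circ_triangle hn (-(1 - s) + ((i:ℝ) - j + 1)) (-t)
    have h2 := circ_triangle hn (-(1-s)) ((i:ℝ) - j + 1)
    have e : -(1 - s) + ((i:ℝ) - j + 1) + -t = p - q := by linarith
    rw [e] at h1
    have h3 : circ n (-t) = circ n t := circ_neg hn t
    have h4 : circ n (-(1-s)) = circ n (1-s) := circ_neg hn _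
    rw [hdbu]
    rw [hcirc] at h1
    linarith
  have hT4 : |δ| ≤ (1 - s) + dbv + (1 - t) := by
    have h1 := circ_triangle hn (-(1 - s) + ((i:ℝ) - j)) (1 - t)
    have h2 := circ_triangle hn (-(1-s)) ((i:ℝ) - j)
    have e : -(1 - s) + ((i:ℝ) - j) + (1 - t) = p - q := by linarith
    rw [e] at h1
    have h4 : circ n (-(1-s)) = circ n (1-s) := circ_neg hn _
    rw [hdbv]
    rw [hcirc] at h1
    linarith
  have hroute : |δ| ≤
      min (min (s + dau + t) (s + dav + (1 - t))) (min ((1 - s) + dbu + t) ((1 - s) + dbv + (1 - t))) :=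
    le_min (le_min hT1 hT2) (le_min hT3 hT4)
  -- branch Y impossible
  have hYfalse : ¬ (c ((i : ZMod n)) = c (((j : ZMod n)) + 1) ∧
      c (((i : ZMod n)) + 1) = c ((j : ZMod n))) := by
    rintro ⟨h1, h2⟩
    have e1 : circ n ((i:ℝ) - j - 1) = 0 := zero_av h1
    have e2 : circ n ((i:ℝ) - j + 1) = 0 := zero_bu h2
    obtain ⟨k1, hk1⟩ := (circ_eq_zero_iff hn _).mp e1
    obtain ⟨k2, hk2⟩ := (circ_eq_zero_iff hn _).mp e2
    have h2eq : ((k2 - k1 : ℤ):ℝ) * n = 2 := by push_cast; linarith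
    rcases eq_or_ne (k2 - k1) 0 with h0 | h0
    · rw [h0] at h2eq; simp at h2eq
    · have : (1:ℝ) ≤ |((k2 - k1 : ℤ):ℝ)| := by
        have := Int.one_le_abs h0
        calc (1:ℝ) ≤ ((|k2 - k1| : ℤ) : ℝ) := by exact_mod_cast this
          _ = |((k2 - k1 : ℤ):ℝ)| := by push_cast; rfl
      have h2' : |((k2 - k1 : ℤ):ℝ)| * n = 2 := by
        rw [← abs_of_pos hn', ← abs_mul, h2eq]; norm_num
      nlinarith
  refine le_antisymm ?_ ?_
  · -- upper bound : rdist ≤ circ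
    rw [hcirc]
    rcases lt_trichotomy D 0 with hD0 | hD0 | hD0
    · -- D ≤ -1, use T3
      have hD1 : (D:ℝ) ≤ -1 := by
        have hD1' : D ≤ -1 := by omega
        exact_mod_cast hD1'
      have hδneg : δ < 0 := by rw [hδD]; push_cast; linarith
      have habs' : -δ ≤ (n:ℝ)/2 := by
        have := neg_le_abs δ; linarith [le_abs_self δ, habs]
      have hm0 : (0:ℤ) ≤ -(D+1) := by omega
      have hmlt : ((-(D+1) : ℤ):ℝ) < -δ := by push_cast; rw [hδD]; push_cast; linarith
      have hmn : (-(D+1) : ℤ) ≤ (n:ℤ) := by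
        have : ((-(D+1) : ℤ):ℝ) ≤ (n:ℝ) := by linarith
        exact_mod_cast this
      have hce : circ n ((i:ℝ) - j + 1) = ((-(D+1) : ℤ):ℝ) := by
        have e : (i:ℝ) - j + 1 = -((((-(D+1)) : ℤ):ℝ)) + K * n := by
          push_cast; rw [hDdef]; push_cast; ring
        rw [e]
        rw [show (-((((-(D+1)) : ℤ):ℝ)) + K * (n:ℝ)) = (-((((-(D+1)) : ℤ):ℝ))) + K * (n:ℝ) from rfl]
        rw [circ_add_int_mul hn _ K, circ_neg hn]
        rw [circ_int_min hn _ hm0 hmn]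
        rw [min_eq_left]
        push_cast
        linarith
      have hT3v : (1 - s) + dbu + t = -δ := by
        rw [hdbu, hce, hδD]; push_cast; ring
      calc min (min (min (s + dau + t) (s + dav + (1 - t))) (min ((1 - s) + dbu + t) ((1 - s) + dbv + (1 - t)))) _
            ≤ min (min (s + dau + t) (s + dav + (1 - t))) (min ((1 - s) + dbu + t) ((1 - s) + dbv + (1 - t))) := min_le_left _ _
        _ ≤ min ((1 - s) + dbu + t) ((1 - s) + dbv + (1 - t)) := min_le_right _ _
        _ ≤ (1 - s) + dbu + t := min_le_left _ _
        _ = -δ := hT3v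
        _ = |δ| := (abs_of_neg hδneg).symm
    · -- D = 0, branch X applies
      have e0 : i - j - K * (n:ℤ) = 0 := hDdef.symm.trans hD0
      have hij : ((i : ZMod n)) = ((j : ZMod n)) := by
        refine (ZMod.intCast_eq_intCast_iff _ _ _).mpr ((Int.modEq_iff_dvd).mpr ⟨-K, ?_⟩)
        linear_combination -e0
      have hcond : c ((i : ZMod n)) = c ((j : ZMod n)) ∧
          c (((i : ZMod n)) + 1) = c (((j : ZMod n)) + 1) := by
        constructor
        · rw [hij]
        · rw [hij]
      rw [if_pos hcond]
      have e : |s - t| = |δ| := by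
        rw [hδD, hD0]; push_cast; ring_nf
      refine le_trans (le_trans (min_le_right _ _) (min_le_left _ _)) (le_of_eq e)
    · -- D ≥ 1, use T2
      have hD1 : (1:ℝ) ≤ (D:ℝ) := by exact_mod_cast hD0
      have hδpos : 0 < δ := by rw [hδD]; push_cast; linarith
      have habs' : δ ≤ (n:ℝ)/2 := le_trans (le_abs_self δ) habs
      have hm0 : (0:ℤ) ≤ D - 1 := by omega
      have hmlt : (((D - 1) : ℤ):ℝ) < δ := by push_cast; rw [hδD]; push_cast; linarith
      have hmn : (D - 1 : ℤ) ≤ (n:ℤ) := by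
        have : (((D-1) : ℤ):ℝ) ≤ (n:ℝ) := by linarith
        exact_mod_cast this
      have hce : circ n ((i:ℝ) - j - 1) = (((D-1) : ℤ):ℝ) := by
        have e : (i:ℝ) - j - 1 = ((((D-1)) : ℤ):ℝ) + K * n := by
          rw [hDdef]; push_cast; ring
        rw [e, circ_add_int_mul hn _ K]
        rw [circ_int_min hn _ hm0 hmn]
        rw [min_eq_left]
        push_cast
        linarith
      have hT2v : s + dav + (1 - t) = δ := by
        rw [hdav, hce, hδD]; push_cast; ring
      calc min (min (min (s + dau + t) (s + dav + (1 - t))) (min ((1 - s) + dbu + t) ((1 - s) + dbv + (1 - t)))) _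
            ≤ min (min (s + dau + t) (s + dav + (1 - t))) (min ((1 - s) + dbu + t) ((1 - s) + dbv + (1 - t))) := min_le_left _ _
        _ ≤ min (s + dau + t) (s + dav + (1 - t)) := min_le_left _ _
        _ ≤ s + dav + (1 - t) := min_le_right _ _
        _ = δ := hT2v
        _ = |δ| := (abs_of_pos hδpos).symm
  · -- lower bound : circ ≤ rdist
    rw [hcirc]
    refine le_min hroute (le_min ?_ ?_)
    · split_ifs with hX
      · -- a = u case
        have e1 : circ n ((i:ℝ) - j) = 0 := zero_au hX.1
        obtain ⟨k, hk⟩ := (circ_eq_zero_iff hn _).mp e1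
        have e2 : s - t = (p - q) - k * n := by linarith
        calc |δ| = circ n (p - q) := hcirc.symm
          _ ≤ |(p - q) - k * n| := circ_le hn _ _
          _ = |s - t| := by rw [e2]
      · exact hroute
    · rw [if_neg hYfalse]
      exact hroute

end IsoCore

section AlmostCore

variable {G : SimpleGraph V} {n : ℕ} {c : ZMod n → V}

lemma almost_of_vertex (hn : 0 < n) {ξ : ℝ}
    (hvi : ∀ x y : ℤ, (n:ℝ)/2 - 2 ≤ circ n ((x:ℝ) - (y:ℝ)) →
      ξ * ((n:ℝ)/2) ≤ (G.dist (c ((x : ZMod n))) (c ((y : ZMod n))) : ℝ)) :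
    IsAlmostIsometricCycle G n c ξ := by
  intro p q hant
  have hant' : circ n (p - q) = (n:ℝ)/2 := by
    rw [← cdist_eq_circ hn]; exact hant
  set i : ℤ := ⌊p⌋ with hi
  set j : ℤ := ⌊q⌋ with hj
  set s : ℝ := Int.fract p with hsdef
  set t : ℝ := Int.fract q with htdef
  have hs0 : 0 ≤ s := Int.fract_nonneg p
  have hs1 : s < 1 := Int.fract_lt_one p
  have ht0 : 0 ≤ t := Int.fract_nonneg q
  have ht1 : t < 1 := Int.fract_lt_one q
  have hps : (i:ℝ) + s = p := Int.floor_add_fract p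
  have hqt : (j:ℝ) + t = q := Int.floor_add_fract q
  have key : ∀ x y : ℤ, |((x:ℝ) - y) - (p - q)| ≤ 2 →
      (n:ℝ)/2 - 2 ≤ circ n ((x:ℝ) - y) := by
    intro x y h
    have hl := circ_lipschitz hn ((x:ℝ) - y) (p - q)
    have := abs_le.mp hl
    linarith [this.1, abs_le.mp h, hant']
  have h1 : (n:ℝ)/2 - 2 ≤ circ n ((i:ℝ) - j) := by
    refine key i j ?_
    rw [abs_le]; constructor <;> push_cast <;> nlinarith
  have h2 : (n:ℝ)/2 - 2 ≤ circ n ((i:ℝ) - (((j+1):ℤ):ℝ)) := by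
    refine key i (j+1) ?_
    rw [abs_le]; constructor <;> push_cast <;> nlinarith
  have h3 : (n:ℝ)/2 - 2 ≤ circ n ((((i+1):ℤ):ℝ) - (j:ℝ)) := by
    refine key (i+1) j ?_
    rw [abs_le]; constructor <;> push_cast <;> nlinarith
  have h4 : (n:ℝ)/2 - 2 ≤ circ n ((((i+1):ℤ):ℝ) - (((j+1):ℤ):ℝ)) := by
    refine key (i+1) (j+1) ?_
    rw [abs_le]; constructor <;> push_cast <;> nlinarith
  have d1 := hvi i j h1
  have d2 := hvi i (j+1) h2
  have d3 := hvi (i+1) j h3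
  have d4 := hvi (i+1) (j+1) h4
  rw [castsucc n j] at d2 d4
  rw [castsucc n i] at d3 d4
  refine le_trans ?_ (min4_le_rdist G n c p q)
  exact le_min (le_min d1 d2) (le_min d3 d4)

/-- extraction of a near-antipodal short chord from a non-almost-isometric cycle -/
lemma chord_of_strong {θ : ℕ} {ξ : ℝ}
    (hθ : ∀ (m : ℕ) (c' : ZMod m → V), 0 < m → IsCycle G m c' →
      IsAlmostIsometricCycle G m c' ξ → m ≤ θ)
    (hn : θ < n) (hcyc : IsCycle G n c) :
    ∃ x y : ℤ, (n:ℝ)/2 - 2 ≤ circ n ((x:ℝ) - (y:ℝ)) ∧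
      (G.dist (c ((x : ZMod n))) (c ((y : ZMod n))) : ℝ) < ξ * ((n:ℝ)/2) := by
  by_contra hcon
  push_neg at hcon
  exact absurd (hθ n c (by omega) hcyc (almost_of_vertex (by omega) hcon)) (by omega)

/-- extraction of a strict chord from a non-isometric cycle -/
lemma chord_of_shortcut {θ : ℕ}
    (hθ : ∀ (m : ℕ) (c' : ZMod m → V), 0 < m → IsCycle G m c' →
      IsIsometricCycle G m c' → m ≤ θ)
    (hn : θ < n) (hn3 : 3 ≤ n) (hcyc : IsCycle G n c) :
    ∃ x y : ℤ, (G.dist (c ((x : ZMod n))) (c ((y : ZMod n))) : ℝ) ≠ circ n ((x:ℝ) - (y:ℝ)) := by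
  by_contra hcon
  push_neg at hcon
  exact absurd (hθ n c (by omega) hcyc (isometric_of_vertex_iso hn3 hcon)) (by omega)

end AlmostCore

section ActionBasics

variable {Gp : Type} [Group Gp] {W : Type} {G : SimpleGraph W} {ρ : Gp →* Equiv.Perm W}

/-- each `ρ g` as a graph homomorphism -/
def rhoHom (hact : IsGraphAction Gp G ρ) (g : Gp) : G →g G :=
  ⟨(ρ g : Equiv.Perm W), fun h => (hact g _ _).mpr h⟩

lemma rho_inv_apply (g : Gp) (u : W) : ρ g⁻¹ (ρ g u) = u := by
  have : ρ g⁻¹ * ρ g = 1 := by rw [← map_mul]; simp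
  calc ρ g⁻¹ (ρ g u) = (ρ g⁻¹ * ρ g) u := rfl
    _ = u := by rw [this]; rfl

lemma dist_rho (hconn : G.Connected) (hact : IsGraphAction Gp G ρ) (g : Gp) (u v : W) :
    G.dist (ρ g u) (ρ g v) = G.dist u v := by
  have key : ∀ (g : Gp) (u v : W), G.dist (ρ g u) (ρ g v) ≤ G.dist u v := by
    intro g u v
    obtain ⟨p, hp⟩ := hconn.exists_walk_length_eq_dist u v
    calc G.dist (ρ g u) (ρ g v) ≤ (p.map (rhoHom hact g)).length := SimpleGraph.dist_le _
      _ = p.length := SimpleGraph.Walk.length_map _ _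
      _ = G.dist u v := hp
  refine le_antisymm (key g u v) ?_
  have := key g⁻¹ (ρ g u) (ρ g v)
  rwa [rho_inv_apply, rho_inv_apply] at this

lemma fiber_finite (hproper : ProperAction Gp ρ) (u v : W) :
    {g : Gp | ρ g u = v}.Finite := by
  rcases Set.eq_empty_or_nonempty {g : Gp | ρ g u = v} with h | ⟨g₀, hg₀⟩
  · rw [h]; exact Set.finite_empty
  · have hg₀' : ρ g₀ u = v := hg₀
    have hsub : {g : Gp | ρ g u = v} ⊆ (fun h => g₀ * h) '' {h : Gp | ρ h u = u} := by
      intro g hg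
      have hg' : ρ g u = v := hg
      refine ⟨g₀⁻¹ * g, ?_, by group⟩
      have e : ρ (g₀⁻¹ * g) u = ρ g₀⁻¹ (ρ g u) := by rw [map_mul]; rfl
      rw [Set.mem_setOf_eq, e, hg', ← hg₀', rho_inv_apply]
    exact Set.Finite.subset (Set.Finite.image _ (hproper u)) hsub

lemma neighbors_finite (hproper : ProperAction Gp ρ)
    (E₀ : Finset (W × W))
    (hE₀ : ∀ u v : W, G.Adj u v → ∃ g : Gp, ∃ e ∈ E₀, ρ g e.1 = u ∧ ρ g e.2 = v)
    (v : W) : {w : W | G.Adj v w}.Finite := by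
  have hsub : {w : W | G.Adj v w} ⊆ ⋃ e ∈ (E₀ : Set (W × W)), (fun g : Gp => ρ g e.2) '' {g : Gp | ρ g e.1 = v} := by
    intro w hw
    obtain ⟨g, e, he, h1, h2⟩ := hE₀ v w hw
    exact Set.mem_biUnion he ⟨g, h1, h2⟩
  exact Set.Finite.subset
    (Set.Finite.biUnion E₀.finite_toSet (fun e _ => (fiber_finite hproper e.1 v).image _)) hsub

lemma ball_finite (hconn : G.Connected) (hproper : ProperAction Gp ρ)
    (E₀ : Finset (W × W))
    (hE₀ : ∀ u v : W, G.Adj u v → ∃ g : Gp, ∃ e ∈ E₀, ρ g e.1 = u ∧ ρ g e.2 = v)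
    (v : W) : ∀ r : ℕ, {w : W | G.dist v w ≤ r}.Finite := by
  intro r
  induction r with
  | zero =>
    refine Set.Finite.subset (Set.finite_singleton v) ?_
    intro w hw
    simp only [Set.mem_setOf_eq, Nat.le_zero] at hw
    have := (hconn.dist_eq_zero_iff).mp hw
    simp [this.symm]
  | succ r ih =>
    have hsub : {w : W | G.dist v w ≤ r + 1} ⊆
        {w : W | G.dist v w ≤ r} ∪ ⋃ w ∈ {w : W | G.dist v w ≤ r}, {x : W | G.Adj w x} := by
      intro x hx
      simp only [Set.mem_setOf_eq] at hx
      rcases le_or_gt (G.dist v x) r with h | h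
      · exact Or.inl h
      · have hd : G.dist v x = r + 1 := by omega
        obtain ⟨p, hp⟩ := hconn.exists_walk_length_eq_dist v x
        rw [hd] at hp
        have hrev : (p.reverse).length = r + 1 := by
          rw [SimpleGraph.Walk.length_reverse]; exact hp
        have key : ∀ (pr : G.Walk x v), pr.length = r + 1 →
            ∃ w, G.Adj w x ∧ G.dist v w ≤ r := by
          intro pr hl
          cases pr with
          | nil => simp at hl
          | cons hadj q =>
            refine ⟨_, hadj.symm, ?_⟩
            have h1 : G.dist _ v ≤ q.length := SimpleGraph.dist_le q
            rw [SimpleGraph.dist_comm] at h1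
            simp only [SimpleGraph.Walk.length_cons] at hl
            omega
        obtain ⟨w, hadj, hw⟩ := key p.reverse hrev
        right
        exact Set.mem_biUnion hw hadj
    exact Set.Finite.subset
      (Set.Finite.union ih (Set.Finite.biUnion ih (fun w _ => neighbors_finite hproper E₀ hE₀ w))) hsub

lemma sphere_gens_finite (hconn : G.Connected) (hproper : ProperAction Gp ρ)
    (E₀ : Finset (W × W))
    (hE₀ : ∀ u v : W, G.Adj u v → ∃ g : Gp, ∃ e ∈ E₀, ρ g e.1 = u ∧ ρ g e.2 = v)
    (v₀ : W) (M : ℕ) : {g : Gp | G.dist v₀ (ρ g v₀) ≤ M}.Finite := by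
  have hsub : {g : Gp | G.dist v₀ (ρ g v₀) ≤ M} ⊆
      ⋃ w ∈ {w : W | G.dist v₀ w ≤ M}, {g : Gp | ρ g v₀ = w} := by
    intro g hg
    exact Set.mem_biUnion hg rfl
  exact Set.Finite.subset
    (Set.Finite.biUnion (ball_finite hconn hproper E₀ hE₀ v₀ M)
      (fun w _ => fiber_finite hproper v₀ w)) hsub

end ActionBasics

section Area

variable {k : ℕ}

/-- `w` is a product of at most `m` conjugates of relators (or inverses). -/
def AreaLe (rels : Finset (FreeGroup (Fin k))) (w : FreeGroup (Fin k)) (m : ℕ) : Prop :=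
  ∃ L : List (FreeGroup (Fin k)), L.length ≤ m ∧
    (∀ x ∈ L, ∃ (g r : FreeGroup (Fin k)), r ∈ rels ∧
      (x = g * r * g⁻¹ ∨ x = g * r⁻¹ * g⁻¹)) ∧
    L.prod = w

variable {rels : Finset (FreeGroup (Fin k))}

lemma areaLe_one : AreaLe rels 1 0 := ⟨[], by simp, by simp, by simp⟩

lemma areaLe_rel {r : FreeGroup (Fin k)} (h : r ∈ rels) : AreaLe rels r 1 := by
  refine ⟨[r], by simp, ?_, by simp⟩
  intro x hx
  simp only [List.mem_singleton] at hx
  subst hx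
  exact ⟨1, x, h, Or.inl (by group)⟩

lemma areaLe_rel_inv {r : FreeGroup (Fin k)} (h : r ∈ rels) : AreaLe rels r⁻¹ 1 := by
  refine ⟨[r⁻¹], by simp, ?_, by simp⟩
  intro x hx
  simp only [List.mem_singleton] at hx
  subst hx
  exact ⟨1, r, h, Or.inr (by group)⟩

lemma areaLe_mul {w₁ w₂ : FreeGroup (Fin k)} {m₁ m₂ : ℕ}
    (h₁ : AreaLe rels w₁ m₁) (h₂ : AreaLe rels w₂ m₂) : AreaLe rels (w₁ * w₂) (m₁ + m₂) := by
  obtain ⟨L₁, hl₁, hm₁, hp₁⟩ := h₁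
  obtain ⟨L₂, hl₂, hm₂, hp₂⟩ := h₂
  refine ⟨L₁ ++ L₂, ?_, ?_, ?_⟩
  · rw [List.length_append]; omega
  · intro x hx
    rcases List.mem_append.mp hx with h | h
    · exact hm₁ x h
    · exact hm₂ x h
  · rw [List.prod_append, hp₁, hp₂]

lemma prod_conj_map (g : FreeGroup (Fin k)) (L : List (FreeGroup (Fin k))) :
    (L.map fun x => g * x * g⁻¹).prod = g * L.prod * g⁻¹ := by
  induction L with
  | nil => simp
  | cons a L ih => simp only [List.map_cons, List.prod_cons, ih]; group

lemma areaLe_conj {w : FreeGroup (Fin k)} {m : ℕ} (g : FreeGroup (Fin k))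
    (h : AreaLe rels w m) : AreaLe rels (g * w * g⁻¹) m := by
  obtain ⟨L, hl, hm, hp⟩ := h
  refine ⟨L.map fun x => g * x * g⁻¹, by simpa using hl, ?_, by rw [prod_conj_map, hp]⟩
  intro x hx
  obtain ⟨y, hy, rfl⟩ := List.mem_map.mp hx
  obtain ⟨g', r, hr, hc⟩ := hm y hy
  rcases hc with rfl | rfl
  · exact ⟨g * g', r, hr, Or.inl (by group)⟩
  · exact ⟨g * g', r, hr, Or.inr (by group)⟩

lemma areaLe_mono {w : FreeGroup (Fin k)} {m m' : ℕ} (h : m ≤ m')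
    (ha : AreaLe rels w m) : AreaLe rels w m' := by
  obtain ⟨L, hl, hm, hp⟩ := ha
  exact ⟨L, le_trans hl h, hm, hp⟩

lemma areaLe_of_eq {w w' : FreeGroup (Fin k)} {m : ℕ} (h : w = w')
    (ha : AreaLe rels w m) : AreaLe rels w' m := h ▸ ha

lemma len_mul_le (x y : FreeGroup (Fin k)) :
    (x * y).toWord.length ≤ x.toWord.length + y.toWord.length :=
  FreeGroup.norm_mul_le x y

lemma len_inv (x : FreeGroup (Fin k)) : (x⁻¹).toWord.length = x.toWord.length :=
  FreeGroup.norm_inv_eq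

end Area

section ChainsDef

variable {W : Type} (G : SimpleGraph W)

/-- `es` is a list of edges forming a walk from `s` to `t`. -/
def Chains : W → W → List (W × W) → Prop
  | s, t, [] => s = t
  | s, t, e :: es => s = e.1 ∧ G.Adj e.1 e.2 ∧ Chains e.2 t es

variable {G}

lemma chains_append {s m t : W} {es₁ es₂ : List (W × W)}
    (h₁ : Chains G s m es₁) (h₂ : Chains G m t es₂) : Chains G s t (es₁ ++ es₂) := by
  induction es₁ generalizing s with
  | nil => rw [show s = m from h₁]; exact h₂
  | cons e es ih =>
    obtain ⟨h1, h2, h3⟩ := h₁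
    exact ⟨h1, h2, ih h3⟩

lemma chains_split {s t : W} {es₁ es₂ : List (W × W)}
    (h : Chains G s t (es₁ ++ es₂)) : ∃ m, Chains G s m es₁ ∧ Chains G m t es₂ := by
  induction es₁ generalizing s with
  | nil => exact ⟨s, rfl, h⟩
  | cons e es ih =>
    obtain ⟨h1, h2, h3⟩ := h
    obtain ⟨m, hm1, hm2⟩ := ih h3
    exact ⟨m, ⟨h1, h2, hm1⟩, hm2⟩

lemma chains_dist (hconn : G.Connected) {s t : W} {es : List (W × W)}
    (h : Chains G s t es) : G.dist s t ≤ es.length := by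
  induction es generalizing s with
  | nil => rw [show s = t from h]; simp
  | cons e es ih =>
    obtain ⟨h1, h2, h3⟩ := h
    have hd1 : G.dist s e.2 ≤ 1 := by
      subst h1
      calc G.dist e.1 e.2 ≤ (h2.toWalk).length := SimpleGraph.dist_le _
        _ = 1 := by simp
    calc G.dist s t ≤ G.dist s e.2 + G.dist e.2 t := hconn.dist_triangle
      _ ≤ 1 + es.length := add_le_add hd1 (ih h3)
      _ = (e :: es).length := by simp [add_comm]

lemma chains_adj {s t : W} {es : List (W × W)} (h : Chains G s t es) :
    ∀ e ∈ es, G.Adj e.1 e.2 := by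
  induction es generalizing s with
  | nil => intro e he; simp at he
  | cons e' es ih =>
    obtain ⟨h1, h2, h3⟩ := h
    intro e he
    rcases List.mem_cons.mp he with rfl | he
    · exact h2
    · exact ih h3 e he

lemma chains_first {s t : W} {es : List (W × W)} (h : Chains G s t es)
    (hne : 0 < es.length) : (es[0]'hne).1 = s := by
  cases es with
  | nil => simp at hne
  | cons e es => exact h.1.symm

lemma chains_succ {s t : W} {es : List (W × W)} (h : Chains G s t es) :
    ∀ (m : ℕ) (h1 : m + 1 < es.length), (es[m]'(by omega)).2 = (es[m+1]'h1).1 := by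
  induction es generalizing s with
  | nil => intro m h1; simp at h1
  | cons e es ih =>
    obtain ⟨hh1, hh2, hh3⟩ := h
    intro m h1
    cases m with
    | zero =>
      simp only [List.getElem_cons_zero, List.getElem_cons_succ]
      exact (chains_first hh3 (by simpa using h1)).symm
    | succ m =>
      simp only [List.getElem_cons_succ]
      exact ih hh3 m (by simpa using h1)

lemma chains_last {s t : W} {es : List (W × W)} (h : Chains G s t es)
    (hne : 0 < es.length) : (es[es.length - 1]'(by omega)).2 = t := by
  induction es generalizing s with
  | nil => simp at hne
  | cons e es ih =>
    obtain ⟨h1, h2, h3⟩ := h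
    cases es with
    | nil =>
      simp only [List.length_cons, List.length_nil]
      exact h3
    | cons e' es' =>
      have := ih h3 (by simp)
      simpa using this

/-- reversal of an edge path -/
def revE {W : Type} (es : List (W × W)) : List (W × W) := (es.map Prod.swap).reverse

lemma chains_rev {s t : W} {es : List (W × W)} (h : Chains G s t es) :
    Chains G t s (revE es) := by
  induction es generalizing s with
  | nil => exact (show s = t from h).symm
  | cons e es ih =>
    obtain ⟨h1, h2, h3⟩ := h
    have e1 : revE (e :: es) = revE es ++ [Prod.swap e] := by simp [revE]
    rw [e1]
    refine chains_append (ih h3) ?_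
    exact ⟨rfl, h2.symm, h1.symm⟩

@[simp] lemma revE_length {W : Type} (es : List (W × W)) : (revE es).length = es.length := by
  simp [revE]

end ChainsDef

section WordE

variable {W : Type} {k : ℕ}

/-- word associated to an edge path -/
def wordE (E : W → W → FreeGroup (Fin k)) (es : List (W × W)) : FreeGroup (Fin k) :=
  (es.map fun e => E e.1 e.2).prod

@[simp] lemma wordE_nil (E : W → W → FreeGroup (Fin k)) : wordE E [] = 1 := rfl

lemma wordE_cons (E : W → W → FreeGroup (Fin k)) (e : W × W) (es : List (W × W)) :
    wordE E (e :: es) = E e.1 e.2 * wordE E es := by simp [wordE]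

lemma wordE_append (E : W → W → FreeGroup (Fin k)) (es₁ es₂ : List (W × W)) :
    wordE E (es₁ ++ es₂) = wordE E es₁ * wordE E es₂ := by simp [wordE]

lemma wordE_rev (E : W → W → FreeGroup (Fin k)) (hE : ∀ u v : W, E v u = (E u v)⁻¹)
    (es : List (W × W)) : wordE E (revE es) = (wordE E es)⁻¹ := by
  induction es with
  | nil => simp [revE]
  | cons e es ih =>
    have e1 : revE (e :: es) = revE es ++ [Prod.swap e] := by simp [revE]
    rw [e1, wordE_append, ih]
    rw [show wordE E [Prod.swap e] = E e.2 e.1 from by simp [wordE]]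
    rw [hE e.1 e.2, wordE_cons]
    group

variable {G : SimpleGraph W}

lemma wordE_pi {Gp : Type} [Group Gp] (π : FreeGroup (Fin k) →* Gp) (hh : W → Gp)
    (E : W → W → FreeGroup (Fin k))
    (hspec : ∀ u v : W, G.Adj u v → π (E u v) = (hh u)⁻¹ * hh v)
    {s t : W} {es : List (W × W)} (h : Chains G s t es) :
    π (wordE E es) = (hh s)⁻¹ * hh t := by
  induction es generalizing s with
  | nil => rw [show s = t from h]; simp
  | cons e es ih =>
    obtain ⟨h1, h2, h3⟩ := h
    rw [wordE_cons, map_mul, hspec e.1 e.2 h2, ih h3, h1]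
    group

lemma wordE_len (E : W → W → FreeGroup (Fin k)) (Q : ℕ)
    (hlen : ∀ u v : W, G.Adj u v → (E u v).toWord.length ≤ Q)
    {s t : W} {es : List (W × W)} (h : Chains G s t es) :
    (wordE E es).toWord.length ≤ Q * es.length := by
  induction es generalizing s with
  | nil => simp [wordE]
  | cons e es ih =>
    obtain ⟨h1, h2, h3⟩ := h
    rw [wordE_cons]
    calc (E e.1 e.2 * wordE E es).toWord.length
        ≤ (E e.1 e.2).toWord.length + (wordE E es).toWord.length :=
          FreeGroup.norm_mul_le _ _
      _ ≤ Q + Q * es.length := add_le_add (hlen e.1 e.2 h2) (ih h3)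
      _ = Q * (e :: es).length := by simp [Nat.mul_succ, Nat.mul_add]; ring

end WordE

section Fill

variable {W : Type} {k : ℕ} {G : SimpleGraph W}

/-- edge list of a walk -/
def walkEdges : {x y : W} → G.Walk x y → List (W × W)
  | _, _, SimpleGraph.Walk.nil => []
  | _, _, @SimpleGraph.Walk.cons _ _ x v _ h q => (x, v) :: walkEdges q

lemma chains_walkEdges : ∀ {x y : W} (p : G.Walk x y), Chains G x y (walkEdges p)
  | _, _, SimpleGraph.Walk.nil => rfl
  | _, _, @SimpleGraph.Walk.cons _ _ x v _ h q => ⟨rfl, h, chains_walkEdges q⟩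

lemma walkEdges_length : ∀ {x y : W} (p : G.Walk x y), (walkEdges p).length = p.length
  | _, _, SimpleGraph.Walk.nil => rfl
  | _, _, @SimpleGraph.Walk.cons _ _ x v _ h q => by
    simp [walkEdges, walkEdges_length q]

lemma cycle_dist_le (hconn : G.Connected) {n : ℕ} {c : ZMod n → W} (hcyc : IsCycle G n c)
    (x : ZMod n) (m : ℕ) : G.dist (c x) (c (x + (m : ZMod n))) ≤ m := by
  induction m with
  | zero => simp
  | succ m ih =>
    have h1 : G.dist (c (x + (m : ZMod n))) (c (x + (m : ZMod n) + 1)) ≤ 1 := by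
      calc G.dist (c (x + (m : ZMod n))) (c (x + (m : ZMod n) + 1))
          ≤ ((hcyc (x + (m : ZMod n))).toWalk).length := SimpleGraph.dist_le _
        _ = 1 := by simp
    calc G.dist (c x) (c (x + ((m+1 : ℕ) : ZMod n)))
        = G.dist (c x) (c (x + (m : ZMod n) + 1)) := by
          congr 2
          push_cast
          ring
      _ ≤ G.dist (c x) (c (x + (m : ZMod n))) + G.dist (c (x + (m : ZMod n))) (c (x + (m : ZMod n) + 1)) :=
          hconn.dist_triangle
      _ ≤ m + 1 := add_le_add ih h1

/-- The generic filling induction. -/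
lemma fill (hconn : G.Connected) (E : W → W → FreeGroup (Fin k))
    (hE : ∀ u v : W, E v u = (E u v)⁻¹)
    (rels : Finset (FreeGroup (Fin k))) (θ₃ : ℕ) (hθ₃ : 1 ≤ θ₃) (Φ : ℕ → ℕ)
    (hbase : ∀ (u : W) (es : List (W × W)), Chains G u u es → 0 < es.length →
      es.length ≤ θ₃ → wordE E es ∈ rels)
    (hΦ1 : ∀ m : ℕ, 0 < m → m ≤ θ₃ → 1 ≤ Φ m)
    (HC : ∀ (n : ℕ) (c : ZMod n → W), θ₃ < n → IsCycle G n c →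
      ∃ a b : ℕ, a < b ∧ b < n ∧
        (n - (b - a)) + G.dist (c ((a : ℕ) : ZMod n)) (c ((b : ℕ) : ZMod n)) < n ∧
        (b - a) + G.dist (c ((a : ℕ) : ZMod n)) (c ((b : ℕ) : ZMod n)) < n ∧
        Φ ((n - (b - a)) + G.dist (c ((a : ℕ) : ZMod n)) (c ((b : ℕ) : ZMod n))) +
          Φ ((b - a) + G.dist (c ((a : ℕ) : ZMod n)) (c ((b : ℕ) : ZMod n))) ≤ Φ n) :
    ∀ (n : ℕ) (u : W) (es : List (W × W)), Chains G u u es → es.length = n →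
      AreaLe rels (wordE E es) (Φ n) := by
  intro n
  induction n using Nat.strong_induction_on with
  | _ n ih =>
  intro u es hch hlen
  rcases Nat.eq_zero_or_pos n with hn0 | hn0
  · subst hn0
    have : es = [] := List.length_eq_zero_iff.mp hlen
    subst this
    simpa using (areaLe_mono (Nat.zero_le _) (areaLe_one (rels := rels)))
  rcases le_or_gt n θ₃ with hsmall | hbig
  · exact areaLe_mono (hΦ1 n hn0 hsmall) (areaLe_rel (hbase u es hch (hlen ▸ hn0) (hlen ▸ hsmall)))
  -- big case
  haveI : NeZero n := ⟨by omega⟩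
  have hlen' : ∀ i : ZMod n, i.val < es.length := fun i => hlen ▸ ZMod.val_lt i
  set c : ZMod n → W := fun i => (es[i.val]'(hlen' i)).1 with hc
  have hone : (1 : ZMod n).val = 1 := by
    rw [ZMod.val_one_eq_one_mod]
    exact Nat.mod_eq_of_lt (by omega)
  have hcyc : IsCycle G n c := by
    intro i
    have hv : i.val < n := ZMod.val_lt i
    have hv1 : (i + 1).val = (i.val + 1) % n := by
      rw [ZMod.val_add, hone]
    rcases Nat.lt_or_ge (i.val + 1) n with h | h
    · have e1 : (i + 1).val = i.val + 1 := by rw [hv1, Nat.mod_eq_of_lt h]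
      have e2 : (es[i.val]'(hlen' i)).2 = (es[i.val + 1]'(by omega : i.val + 1 < es.length)).1 :=
        chains_succ hch i.val (by omega)
      have := chains_adj hch (es[i.val]'(hlen' i)) (List.getElem_mem _)
      rw [hc]
      simp only [e1]
      rw [← e2]
      exact this
    · have hvn : i.val = n - 1 := by omega
      have e1 : (i + 1).val = 0 := by
        rw [hv1]
        have hin : i.val + 1 = n := by omega
        rw [hin, Nat.mod_self]
      have key2 : ∀ (j : ℕ) (hj : j < es.length), j = es.length - 1 → (es[j]'hj).2 = u := by
        intro j hj hje
        subst hje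
        exact chains_last hch (by omega)
      have e2 : (es[i.val]'(hlen' i)).2 = u := key2 i.val (hlen' i) (by omega)
      have e3 : (es[(0:ℕ)]'(by omega : (0:ℕ) < es.length)).1 = u := chains_first hch (by omega)
      have := chains_adj hch (es[i.val]'(hlen' i)) (List.getElem_mem _)
      rw [hc]
      simp only [e1]
      rw [show (es[(0:ℕ)]'(by omega : (0:ℕ) < es.length)).1 = (es[i.val]'(hlen' i)).2 from e3.trans e2.symm]
      exact this
  obtain ⟨a, b, hab, hbn, hlt1, hlt2, hsum⟩ := HC n c hbig hcyc
  have han : a < n := by omega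
  have key3 : ∀ (j j' : ℕ) (hj : j < es.length) (hj' : j' < es.length), j = j' →
      (es[j]'hj) = (es[j']'hj') := by
    intro j j' hj hj' hjj
    subst hjj
    rfl
  have hca : c ((a : ℕ) : ZMod n) = (es[a]'(by omega)).1 := by
    exact congrArg Prod.fst (key3 _ _ (hlen' _) (by omega) (ZMod.val_cast_of_lt han))
  have hcb : c ((b : ℕ) : ZMod n) = (es[b]'(by omega)).1 := by
    exact congrArg Prod.fst (key3 _ _ (hlen' _) (by omega) (ZMod.val_cast_of_lt hbn))
  set A : W := (es[a]'(by omega)).1 with hA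
  set B : W := (es[b]'(by omega)).1 with hB
  set D : ℕ := G.dist A B with hD
  -- split the loop
  set X : List (W × W) := es.take a with hX
  set YZ : List (W × W) := es.drop a with hYZ
  set Y : List (W × W) := YZ.take (b - a) with hY
  set Z : List (W × W) := YZ.drop (b - a) with hZ
  have hXlen : X.length = a := by rw [hX, List.length_take]; omega
  have hYZlen : YZ.length = n - a := by rw [hYZ, List.length_drop, hlen]
  have hYlen : Y.length = b - a := by rw [hY, List.length_take]; omega
  have hZlen : Z.length = n - b := by rw [hZ, List.length_drop]; omega
  have hes : es = X ++ (Y ++ Z) := by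
    rw [hX, hY, hZ, hYZ, List.take_append_drop, List.take_append_drop]
  obtain ⟨m1, hXch, hYZch⟩ := chains_split (hes ▸ hch)
  obtain ⟨m2, hYch, hZch⟩ := chains_split hYZch
  have hm1 : m1 = A := by
    have hYZch' := hYZch
    rw [show Y ++ Z = YZ from by rw [hY, hZ, List.take_append_drop]] at hYZch'
    rw [show YZ = (es[a]'(by omega)) :: es.drop (a+1) from by
      rw [hYZ, List.drop_eq_getElem_cons (by omega : a < es.length)]] at hYZch'
    exact hYZch'.1
  have hm2 : m2 = B := by
    have hZch' := hZch
    rw [show Z = (es[b]'(by omega)) :: es.drop (b+1) from by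
      rw [hZ, hYZ, List.drop_drop, show a + (b - a) = b from by omega,
        List.drop_eq_getElem_cons (by omega : b < es.length)]] at hZch'
    exact hZch'.1
  subst hm1
  subst hm2
  -- geodesic chord
  obtain ⟨p, hp⟩ := hconn.exists_walk_length_eq_dist A B
  set ch : List (W × W) := walkEdges p with hch'
  have hchch : Chains G A B ch := chains_walkEdges p
  have hchlen : ch.length = D := by rw [hch', walkEdges_length, hp, hD]
  set es₁ : List (W × W) := X ++ (ch ++ Z) with hes₁
  set es₂ : List (W × W) := revE ch ++ Y with hes₂
  have hes₁ch : Chains G u u es₁ := chains_append hXch (chains_append hchch hZch)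
  have hes₂ch : Chains G B B es₂ := chains_append (chains_rev hchch) hYch
  have hes₁len : es₁.length = (n - (b - a)) + D := by
    rw [hes₁, List.length_append, List.length_append, hXlen, hchlen, hZlen]
    omega
  have hes₂len : es₂.length = (b - a) + D := by
    rw [hes₂, List.length_append, revE_length, hchlen, hYlen]
    omega
  have hDrw : G.dist (c ((a : ℕ) : ZMod n)) (c ((b : ℕ) : ZMod n)) = D := by
    rw [hca, hcb, hD]
  rw [hDrw] at hlt1 hlt2 hsum
  have harea₁ : AreaLe rels (wordE E es₁) (Φ ((n - (b - a)) + D)) := by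
    have := ih _ hlt1 u es₁ hes₁ch (by rw [hes₁len])
    exact this
  have harea₂ : AreaLe rels (wordE E es₂) (Φ ((b - a) + D)) := by
    have := ih _ hlt2 B es₂ hes₂ch (by rw [hes₂len])
    exact this
  have hkey : wordE E es =
      wordE E es₁ * ((wordE E Z)⁻¹ * wordE E es₂ * ((wordE E Z)⁻¹)⁻¹) := by
    rw [hes, hes₁, hes₂, wordE_append, wordE_append, wordE_append, wordE_append,
      wordE_append, wordE_rev E hE]
    group
  refine areaLe_mono hsum (areaLe_of_eq hkey.symm ?_)
  exact areaLe_mul harea₁ (areaLe_conj _ harea₂)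

end Fill

section MainConstruction

variable {Gp : Type} [Group Gp] {W : Type} {G : SimpleGraph W} {ρ : Gp →* Equiv.Perm W}

lemma chains_map_rho (hact : IsGraphAction Gp G ρ) (g : Gp) {x y : W} {es : List (W × W)}
    (h : Chains G x y es) :
    Chains G (ρ g x) (ρ g y) (es.map (fun e => (ρ g e.1, ρ g e.2))) := by
  induction es generalizing x with
  | nil => exact congrArg (ρ g) (h : x = y)
  | cons e es ih =>
    obtain ⟨h1, h2, h3⟩ := h
    exact ⟨congrArg (ρ g) h1, (hact g _ _).mpr h2, ih h3⟩

lemma main_construction (hconn : G.Connected) (hact : IsGraphAction Gp G ρ)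
    (hproper : ProperAction Gp ρ) (hcc : CocompactAction Gp G ρ)
    (θ₃ : ℕ) (hθ₃ : 1 ≤ θ₃) (Φ : ℕ → ℕ) (hΦ1 : ∀ m : ℕ, 0 < m → m ≤ θ₃ → 1 ≤ Φ m)
    (hΦmono : Monotone Φ)
    (HC : ∀ (n : ℕ) (c : ZMod n → W), θ₃ < n → IsCycle G n c →
      ∃ a b : ℕ, a < b ∧ b < n ∧
        (n - (b - a)) + G.dist (c ((a : ℕ) : ZMod n)) (c ((b : ℕ) : ZMod n)) < n ∧
        (b - a) + G.dist (c ((a : ℕ) : ZMod n)) (c ((b : ℕ) : ZMod n)) < n ∧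
        Φ ((n - (b - a)) + G.dist (c ((a : ℕ) : ZMod n)) (c ((b : ℕ) : ZMod n))) +
          Φ ((b - a) + G.dist (c ((a : ℕ) : ZMod n)) (c ((b : ℕ) : ZMod n))) ≤ Φ n) :
    ∃ (k : ℕ) (rels : Finset (FreeGroup (Fin k))) (Q : ℕ), 1 ≤ Q ∧
      Nonempty (Gp ≃* PresentedGroup ((rels : Set (FreeGroup (Fin k))))) ∧
      ∀ w : FreeGroup (Fin k), w ∈ Subgroup.normalClosure ((rels : Set (FreeGroup (Fin k)))) →
        AreaLe rels w (w.toWord.length + Φ (Q * w.toWord.length)) := by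
  classical
  obtain ⟨⟨V₀, hV₀⟩, ⟨E₀, hE₀⟩⟩ := hcc
  have hWne : Nonempty W := hconn.nonempty
  set v₀ : W := hWne.some with hv₀
  set R : ℕ := V₀.sup (fun v' => G.dist v' v₀) with hR
  have happrox : ∀ v : W, ∃ g : Gp, G.dist v (ρ g v₀) ≤ R := by
    intro v
    obtain ⟨g, v', hv', hgv⟩ := hV₀ v
    refine ⟨g, ?_⟩
    rw [← hgv, dist_rho hconn hact, hR]
    exact Finset.le_sup (f := fun v' => G.dist v' v₀) hv'
  set hh : W → Gp := fun v => (happrox v).choose with hhh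
  have hhd : ∀ v : W, G.dist v (ρ (hh v) v₀) ≤ R := fun v => (happrox v).choose_spec
  set Q : ℕ := 2 * R + 1 with hQ
  have hQ1 : 1 ≤ Q := by omega
  set Sset : Set Gp := {g : Gp | G.dist v₀ (ρ g v₀) ≤ Q} with hSset
  have hSfin : Sset.Finite := sphere_gens_finite hconn hproper E₀ hE₀ v₀ Q
  set Sfin : Finset Gp := hSfin.toFinset with hSfin'
  set k : ℕ := Sfin.card with hk
  set σ : Fin k ≃ {x // x ∈ Sfin} := Sfin.equivFin.symm with hσ
  set π : FreeGroup (Fin k) →* Gp := FreeGroup.lift (fun i => ((σ i : Gp))) with hπ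
  have letter : ∀ g : Gp, G.dist v₀ (ρ g v₀) ≤ Q →
      ∃ x : FreeGroup (Fin k), π x = g ∧ x.toWord.length ≤ 1 := by
    intro g hg
    have hgS : g ∈ Sfin := hSfin.mem_toFinset.mpr hg
    refine ⟨FreeGroup.of (σ.symm ⟨g, hgS⟩), ?_, ?_⟩
    · rw [hπ, FreeGroup.lift_apply_of, Equiv.apply_symm_apply]
    · rw [show (FreeGroup.of (σ.symm ⟨g, hgS⟩)).toWord.length
        = FreeGroup.norm (FreeGroup.of (σ.symm ⟨g, hgS⟩)) from rfl, FreeGroup.norm_of]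
  -- words for arbitrary pairs of vertices
  have GEN : ∀ (dd : ℕ) (u v : W), G.dist u v = dd →
      ∃ x : FreeGroup (Fin k), π x = (hh u)⁻¹ * hh v ∧ x.toWord.length ≤ dd + 2 * R := by
    intro dd
    induction dd with
    | zero =>
      intro u v hd
      have : u = v := (hconn.dist_eq_zero_iff).mp hd
      subst this
      exact ⟨1, by simp, by simp [FreeGroup.toWord_one]⟩
    | succ dm ih =>
      intro u v hd
      obtain ⟨p, hp⟩ := hconn.exists_walk_length_eq_dist u v
      rw [hd] at hp
      cases p with
      | nil => simp at hp
      | @cons _ u' _ hadj q =>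
        simp only [SimpleGraph.Walk.length_cons] at hp
        have hq : G.dist u' v = dm := by
          have h1 : G.dist u' v ≤ dm := by
            calc G.dist u' v ≤ q.length := SimpleGraph.dist_le q
              _ = dm := by omega
          have h2 : G.dist u u' ≤ 1 := by
            calc G.dist u u' ≤ (hadj.toWalk).length := SimpleGraph.dist_le _
              _ = 1 := by simp
          have h3 : G.dist u v ≤ G.dist u u' + G.dist u' v := hconn.dist_triangle
          omega
        obtain ⟨x', hx'1, hx'2⟩ := ih u' v hq
        have hdist : G.dist v₀ (ρ ((hh u)⁻¹ * hh u') v₀) ≤ Q := by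
          have e1 : ρ ((hh u)⁻¹ * hh u') v₀ = ρ (hh u)⁻¹ (ρ (hh u') v₀) := by
            rw [map_mul]; rfl
          have e2 : G.dist v₀ (ρ ((hh u)⁻¹ * hh u') v₀)
              = G.dist (ρ (hh u) v₀) (ρ (hh u') v₀) := by
            rw [e1, ← dist_rho hconn hact (hh u) v₀ (ρ (hh u)⁻¹ (ρ (hh u') v₀))]
            congr 1
            calc ρ (hh u) (ρ (hh u)⁻¹ (ρ (hh u') v₀))
                = ρ (hh u * (hh u)⁻¹) (ρ (hh u') v₀) := by rw [map_mul]; rfl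
              _ = ρ (hh u') v₀ := by simp
          rw [e2]
          have t1 : G.dist (ρ (hh u) v₀) u ≤ R := by
            rw [SimpleGraph.dist_comm]; exact hhd u
          have t2 : G.dist u u' ≤ 1 := by
            calc G.dist u u' ≤ (hadj.toWalk).length := SimpleGraph.dist_le _
              _ = 1 := by simp
          have t3 : G.dist u' (ρ (hh u') v₀) ≤ R := hhd u'
          calc G.dist (ρ (hh u) v₀) (ρ (hh u') v₀)
              ≤ G.dist (ρ (hh u) v₀) u + G.dist u (ρ (hh u') v₀) := hconn.dist_triangle
            _ ≤ R + (G.dist u u' + G.dist u' (ρ (hh u') v₀)) :=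
                add_le_add t1 hconn.dist_triangle
            _ ≤ R + (1 + R) := by omega
            _ = Q := by omega
        obtain ⟨ℓ, hℓ1, hℓ2⟩ := letter _ hdist
        refine ⟨ℓ * x', ?_, ?_⟩
        · rw [map_mul, hℓ1, hx'1]; group
        · calc (ℓ * x').toWord.length ≤ ℓ.toWord.length + x'.toWord.length :=
              len_mul_le _ _
            _ ≤ 1 + (dm + 2 * R) := add_le_add hℓ2 hx'2
            _ = dm + 1 + 2 * R := by omega
  -- edge words
  have rawE : ∀ u v : W, ∃ x : FreeGroup (Fin k),
      π x = (hh u)⁻¹ * hh v ∧ x.toWord.length ≤ G.dist u v + 2 * R :=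
    fun u v => GEN (G.dist u v) u v rfl
  letI : LinearOrder W := linearOrderOfSTO WellOrderingRel
  set E : W → W → FreeGroup (Fin k) := fun u v =>
    if u = v then 1
    else if u < v then (rawE u v).choose
    else ((rawE v u).choose)⁻¹ with hE'
  have hEanti : ∀ u v : W, E v u = (E u v)⁻¹ := by
    intro u v
    rcases eq_or_ne u v with rfl | hne
    · simp [hE']
    · rcases lt_or_gt_of_ne hne with hlt | hgt
      · simp only [hE']
        rw [if_neg hne.symm, if_neg (by exact not_lt_of_gt hlt), if_neg hne, if_pos hlt]
      · simp only [hE']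
        rw [if_neg hne.symm, if_pos hgt, if_neg hne, if_neg (by exact not_lt_of_gt hgt),
          inv_inv]
  have hEspec : ∀ u v : W, π (E u v) = (hh u)⁻¹ * hh v := by
    intro u v
    rcases eq_or_ne u v with rfl | hne
    · simp [hE']
    · rcases lt_or_gt_of_ne hne with hlt | hgt
      · simp only [hE']
        rw [if_neg hne, if_pos hlt]
        exact (rawE u v).choose_spec.1
      · simp only [hE']
        rw [if_neg hne, if_neg (by exact not_lt_of_gt hgt), map_inv,
          (rawE v u).choose_spec.1]
        group
  have hElen : ∀ u v : W, G.Adj u v → (E u v).toWord.length ≤ Q := by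
    intro u v hadj
    have hd1 : G.dist u v ≤ 1 := by
      calc G.dist u v ≤ (hadj.toWalk).length := SimpleGraph.dist_le _
        _ = 1 := by simp
    rcases eq_or_ne u v with rfl | hne
    · simp [hE', FreeGroup.toWord_one]
    · rcases lt_or_gt_of_ne hne with hlt | hgt
      · simp only [hE']
        rw [if_neg hne, if_pos hlt]
        calc (rawE u v).choose.toWord.length ≤ G.dist u v + 2 * R := (rawE u v).choose_spec.2
          _ ≤ Q := by omega
      · simp only [hE']
        rw [if_neg hne, if_neg (by exact not_lt_of_gt hgt)]
        rw [show (((rawE v u).choose)⁻¹).toWord.length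
          = FreeGroup.norm (((rawE v u).choose)⁻¹) from rfl, FreeGroup.norm_inv_eq]
        calc FreeGroup.norm ((rawE v u).choose) ≤ G.dist v u + 2 * R :=
            (rawE v u).choose_spec.2
          _ ≤ Q := by rw [SimpleGraph.dist_comm] at hd1; omega
  have hEspecAdj : ∀ u v : W, G.Adj u v → π (E u v) = (hh u)⁻¹ * hh v :=
    fun u v _ => hEspec u v
  -- relators
  set K₁ : ℕ := Q * Q + 3 + Q * θ₃ with hK₁
  set relsSet : Set (FreeGroup (Fin k)) :=
    {w : FreeGroup (Fin k) | w.toWord.length ≤ K₁ ∧ π w = 1} with hrelsSet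
  have hrelsFin : relsSet.Finite := by
    have hsub : relsSet ⊆ FreeGroup.mk '' {L : List (Fin k × Bool) | L.length ≤ K₁} := by
      rintro w ⟨hl, _⟩
      exact ⟨w.toWord, hl, FreeGroup.mk_toWord⟩
    exact Set.Finite.subset ((List.finite_length_le _ K₁).image _) hsub
  set rels : Finset (FreeGroup (Fin k)) := hrelsFin.toFinset with hrels
  have hrels_mem : ∀ w : FreeGroup (Fin k), w.toWord.length ≤ K₁ → π w = 1 → w ∈ rels := by
    intro w h1 h2
    rw [hrels, Set.Finite.mem_toFinset]
    exact ⟨h1, h2⟩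
  have hrels_ker : ∀ r ∈ rels, π r = 1 := by
    intro r hr
    rw [hrels, Set.Finite.mem_toFinset] at hr
    exact hr.2
  -- base case for fill
  have hbase : ∀ (u : W) (es : List (W × W)), Chains G u u es → 0 < es.length →
      es.length ≤ θ₃ → wordE E es ∈ rels := by
    intro u es hch h0 hsm
    refine hrels_mem _ ?_ ?_
    · calc (wordE E es).toWord.length ≤ Q * es.length := wordE_len E Q hElen hch
        _ ≤ Q * θ₃ := Nat.mul_le_mul_left _ hsm
        _ ≤ K₁ := by omega
    · rw [wordE_pi π hh E hEspecAdj hch]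
      group
  -- fill applies
  have hfill : ∀ (n : ℕ) (u : W) (es : List (W × W)), Chains G u u es → es.length = n →
      AreaLe rels (wordE E es) (Φ n) :=
    fill hconn E hEanti rels θ₃ hθ₃ Φ hbase hΦ1 HC
  -- correction letters
  have tau : ∀ g : Gp, ∃ x : FreeGroup (Fin k),
      π x = g⁻¹ * hh (ρ g v₀) ∧ x.toWord.length ≤ 1 := by
    intro g
    refine letter _ ?_
    have e1 : ρ (g⁻¹ * hh (ρ g v₀)) v₀ = ρ g⁻¹ (ρ (hh (ρ g v₀)) v₀) := by
      rw [map_mul]; rfl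
    have e2 : G.dist v₀ (ρ (g⁻¹ * hh (ρ g v₀)) v₀)
        = G.dist (ρ g v₀) (ρ (hh (ρ g v₀)) v₀) := by
      rw [e1, ← dist_rho hconn hact g v₀ (ρ g⁻¹ (ρ (hh (ρ g v₀)) v₀))]
      congr 1
      calc ρ g (ρ g⁻¹ (ρ (hh (ρ g v₀)) v₀)) = ρ (g * g⁻¹) (ρ (hh (ρ g v₀)) v₀) := by
            rw [map_mul]; rfl
        _ = ρ (hh (ρ g v₀)) v₀ := by simp
    rw [e2]
    exact le_trans (hhd (ρ g v₀)) (by omega)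
  set τ : Gp → FreeGroup (Fin k) := fun g => (tau g).choose with hτ
  have hτspec : ∀ g : Gp, π (τ g) = g⁻¹ * hh (ρ g v₀) := fun g => (tau g).choose_spec.1
  have hτlen : ∀ g : Gp, (τ g).toWord.length ≤ 1 := fun g => (tau g).choose_spec.2
  -- top-level induction over words
  have T : ∀ L : List (Fin k × Bool), ∃ es : List (W × W),
      Chains G v₀ (ρ (π (FreeGroup.mk L)) v₀) es ∧ es.length ≤ Q * L.length ∧
      AreaLe rels ((τ 1 * wordE E es * (τ (π (FreeGroup.mk L)))⁻¹)⁻¹ * FreeGroup.mk L)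
        L.length := by
    intro L
    induction L using List.reverseRecOn with
    | nil =>
      refine ⟨[], ?_, by simp, ?_⟩
      · rw [show FreeGroup.mk ([] : List (Fin k × Bool)) = 1 from FreeGroup.one_eq_mk.symm]
        rw [map_one]
        show v₀ = ρ (1 : Gp) v₀
        simp
      · rw [show FreeGroup.mk ([] : List (Fin k × Bool)) = 1 from FreeGroup.one_eq_mk.symm]
        refine areaLe_of_eq ?_ (areaLe_one)
        rw [wordE_nil]
        rw [map_one]
        group
    | append_singleton L x ihL =>
      obtain ⟨es, hches, hlenes, hareaes⟩ := ihL
      set gL : Gp := π (FreeGroup.mk L) with hgL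
      set ℓ : FreeGroup (Fin k) := FreeGroup.mk [x] with hℓ
      have hmk : FreeGroup.mk (L ++ [x]) = FreeGroup.mk L * ℓ := (FreeGroup.mul_mk).symm
      set s : Gp := π ℓ with hs
      have hslen : ℓ.toWord.length ≤ 1 := by
        calc ℓ.toWord.length = (FreeGroup.mk [x]).toWord.length := rfl
          _ ≤ [x].length := FreeGroup.norm_mk_le
          _ = 1 := rfl
      have hsS : G.dist v₀ (ρ s v₀) ≤ Q := by
        rcases x with ⟨i, b⟩
        cases b
        · have e1 : ℓ = (FreeGroup.of i)⁻¹ := by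
            rw [hℓ, show FreeGroup.of i = FreeGroup.mk [(i, true)] from rfl, FreeGroup.inv_mk]
            congr 1
          have e2 : s = ((σ i : Gp))⁻¹ := by
            rw [hs, e1, map_inv, hπ, FreeGroup.lift_apply_of]
          have hσi : G.dist v₀ (ρ ((σ i : Gp)) v₀) ≤ Q := by
            exact (Set.Finite.mem_toFinset hSfin).mp (σ i).2
          rw [e2]
          have e3 : G.dist v₀ (ρ ((σ i : Gp))⁻¹ v₀)
              = G.dist (ρ ((σ i : Gp)) v₀) v₀ := by
            rw [← dist_rho hconn hact ((σ i : Gp)) v₀ (ρ ((σ i : Gp))⁻¹ v₀)]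
            congr 1
            calc ρ ((σ i : Gp)) (ρ ((σ i : Gp))⁻¹ v₀)
                = ρ (((σ i : Gp)) * ((σ i : Gp))⁻¹) v₀ := by rw [map_mul]; rfl
              _ = v₀ := by simp
          rw [e3, SimpleGraph.dist_comm]
          exact hσi
        · have e2 : s = (σ i : Gp) := by
            rw [hs, hℓ, show FreeGroup.mk [(i, true)] = FreeGroup.of i from rfl, hπ,
              FreeGroup.lift_apply_of]
          rw [e2]
          exact (Set.Finite.mem_toFinset hSfin).mp (σ i).2
      -- new geodesic edges, translated by gL
      obtain ⟨p, hp⟩ := hconn.exists_walk_length_eq_dist v₀ (ρ s v₀)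
      set newEs : List (W × W) := (walkEdges p).map (fun e => (ρ gL e.1, ρ gL e.2))
        with hnewEs
      have hnewch : Chains G (ρ gL v₀) (ρ (gL * s) v₀) newEs := by
        have h0 := chains_map_rho hact gL (chains_walkEdges p)
        have e : ρ (gL * s) v₀ = ρ gL (ρ s v₀) := by rw [map_mul]; rfl
        rw [hnewEs, e]
        exact h0
      have hnewlen : newEs.length ≤ Q := by
        rw [hnewEs, List.length_map, walkEdges_length, hp]
        exact hsS
      set es' : List (W × W) := es ++ newEs with hes'
      have hches' : Chains G v₀ (ρ (π (FreeGroup.mk (L ++ [x]))) v₀) es' := by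
        rw [hmk, map_mul]
        exact chains_append hches hnewch
      have hlenes' : es'.length ≤ Q * (L ++ [x]).length := by
        rw [hes', List.length_append, List.length_append]
        have : Q * (L.length + 1) = Q * L.length + Q := by ring
        simp only [List.length_singleton]
        omega
      -- the relator
      set r : FreeGroup (Fin k) := ℓ⁻¹ * τ gL * wordE E newEs * (τ (gL * s))⁻¹ with hr
      have hπnew : π (wordE E newEs) = (hh (ρ gL v₀))⁻¹ * hh (ρ (gL * s) v₀) :=
        wordE_pi π hh E hEspecAdj hnewch
      have hrel : r ∈ rels := by
        refine hrels_mem _ ?_ ?_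
        · have l0 : (ℓ⁻¹).toWord.length ≤ 1 := by rw [len_inv]; exact hslen
          have l2 : (wordE E newEs).toWord.length ≤ Q * Q := by
            calc (wordE E newEs).toWord.length ≤ Q * newEs.length :=
                wordE_len E Q hElen hnewch
              _ ≤ Q * Q := Nat.mul_le_mul_left _ hnewlen
          have l3 : ((τ (gL * s))⁻¹).toWord.length ≤ 1 := by rw [len_inv]; exact hτlen _
          have m1 := len_mul_le (ℓ⁻¹ * τ gL * wordE E newEs) ((τ (gL * s))⁻¹)
          have m2 := len_mul_le (ℓ⁻¹ * τ gL) (wordE E newEs)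
          have m3 := len_mul_le ℓ⁻¹ (τ gL)
          have l4 := hτlen gL
          have hQθ : 1 ≤ Q * θ₃ := Nat.one_le_iff_ne_zero.mpr (by positivity)
          rw [hr, hK₁]
          omega
        · rw [hr, map_mul, map_mul, map_mul, map_inv, map_inv, hτspec, hτspec, hπnew, ← hs]
          group
      -- area recursion
      have hkey : (τ 1 * wordE E es' * (τ (π (FreeGroup.mk (L ++ [x]))))⁻¹)⁻¹ *
            FreeGroup.mk (L ++ [x]) =
          r⁻¹ * (ℓ⁻¹ * ((τ 1 * wordE E es * (τ gL)⁻¹)⁻¹ * FreeGroup.mk L) * (ℓ⁻¹)⁻¹) := by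
        rw [hmk, hes', wordE_append, hr]
        rw [show π (FreeGroup.mk L * ℓ) = gL * s from by rw [map_mul]]
        group
      refine ⟨es', hches', hlenes', ?_⟩
      refine areaLe_of_eq hkey.symm ?_
      have : (L ++ [x]).length = 1 + L.length := by simp [List.length_append]; omega
      rw [this]
      exact areaLe_mul (areaLe_rel_inv hrel) (areaLe_conj _ hareaes)
  -- surjectivity of π
  have hsurj : Function.Surjective π := by
    intro g
    obtain ⟨x', hx'1, _⟩ := rawE v₀ (ρ g v₀)
    refine ⟨τ 1 * x' * (τ g)⁻¹, ?_⟩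
    rw [map_mul, map_mul, map_inv, hτspec, hτspec, hx'1]
    have e1 : ρ (1 : Gp) v₀ = v₀ := by simp
    rw [e1]
    group
  -- area bound for kernel elements
  have harea : ∀ w : FreeGroup (Fin k), π w = 1 →
      AreaLe rels w (w.toWord.length + Φ (Q * w.toWord.length)) := by
    intro w hw
    obtain ⟨es, hches, hlenes, hareaes⟩ := T w.toWord
    rw [FreeGroup.mk_toWord] at hches hareaes
    rw [hw] at hches hareaes
    have e1 : ρ (1 : Gp) v₀ = v₀ := by simp
    rw [e1] at hches
    have hfes : AreaLe rels (wordE E es) (Φ (Q * w.toWord.length)) := by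
      refine areaLe_mono (hΦmono hlenes) ?_
      exact hfill es.length v₀ es hches rfl
    have hkey : w = (τ 1 * wordE E es * (τ 1)⁻¹) *
        ((τ 1 * wordE E es * (τ 1)⁻¹)⁻¹ * w) := by group
    refine areaLe_of_eq hkey.symm ?_
    rw [Nat.add_comm]
    exact areaLe_mul (areaLe_conj _ hfes) hareaes
  -- kernel = normal closure
  have hncl : Subgroup.normalClosure ((rels : Set (FreeGroup (Fin k)))) = π.ker := by
    refine le_antisymm ?_ ?_
    · refine Subgroup.normalClosure_le_normal ?_
      intro r hr
      exact hrels_ker r hr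
    · intro w hw
      have hw1 : π w = 1 := hw
      obtain ⟨Lst, _, hmem, hprod⟩ := harea w hw1
      rw [← hprod]
      refine Subgroup.list_prod_mem _ ?_
      intro y hy
      obtain ⟨g, r, hr, hc⟩ := hmem y hy
      have hrmem : r ∈ Subgroup.normalClosure ((rels : Set (FreeGroup (Fin k)))) :=
        Subgroup.subset_normalClosure hr
      rcases hc with rfl | rfl
      · exact Subgroup.Normal.conj_mem (Subgroup.normalClosure_normal) r hrmem g
      · exact Subgroup.Normal.conj_mem (Subgroup.normalClosure_normal) r⁻¹
          (Subgroup.inv_mem _ hrmem) g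
  -- the isomorphism
  have hiso : Nonempty (Gp ≃* PresentedGroup ((rels : Set (FreeGroup (Fin k))))) := by
    refine ⟨MulEquiv.symm ?_⟩
    exact (QuotientGroup.quotientMulEquivOfEq hncl).trans
      (QuotientGroup.quotientKerEquivOfSurjective π hsurj)
  refine ⟨k, rels, Q, hQ1, hiso, ?_⟩
  intro w hw
  refine harea w ?_
  have := hncl ▸ hw
  exact this

end MainConstruction

section Instantiations

variable {W : Type} {G : SimpleGraph W}

lemma circ_natval {n : ℕ} [NeZero n] (hn : 0 < n) (x y : ℤ) :
    circ n ((x:ℝ) - (y:ℝ)) =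
      circ n (((((x : ZMod n)).val : ℕ) : ℝ) - (((((y : ZMod n)).val : ℕ)) : ℝ)) := by
  set a' : ℕ := ((x : ZMod n)).val with ha'
  set b' : ℕ := ((y : ZMod n)).val with hb'
  have e1 : (((a' : ℤ)) : ZMod n) = ((x : ZMod n)) := by
    push_cast
    exact ZMod.natCast_rightInverse _
  have e2 : (((b' : ℤ)) : ZMod n) = ((y : ZMod n)) := by
    push_cast
    exact ZMod.natCast_rightInverse _
  obtain ⟨k₁, hk₁⟩ := (Int.modEq_iff_dvd.mp ((ZMod.intCast_eq_intCast_iff _ _ _).mp e1))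
  obtain ⟨k₂, hk₂⟩ := (Int.modEq_iff_dvd.mp ((ZMod.intCast_eq_intCast_iff _ _ _).mp e2))
  have e3 : (x:ℝ) - y = (((a':ℕ):ℝ) - ((b':ℕ):ℝ)) + ((k₁ - k₂ : ℤ)) * n := by
    have r₁ : (x:ℝ) - ((a':ℕ):ℝ) = (n:ℝ) * (k₁:ℝ) := by exact_mod_cast congrArg Int.cast hk₁
    have r₂ : (y:ℝ) - ((b':ℕ):ℝ) = (n:ℝ) * (k₂:ℝ) := by exact_mod_cast congrArg Int.cast hk₂
    push_cast
    push_cast at r₁ r₂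
    linarith
  rw [e3, circ_add_int_mul hn]

lemma c_natval {n : ℕ} [NeZero n] (c : ZMod n → W) (x : ℤ) :
    c ((x : ZMod n)) = c (((((x : ZMod n)).val : ℕ)) : ZMod n) := by
  congr 1
  exact (ZMod.natCast_rightInverse _).symm

lemma circ_zero_self {n : ℕ} (hn : 0 < n) : circ n 0 = 0 := by
  refine le_antisymm ?_ (circ_nonneg _)
  have := circ_le_abs hn (0:ℝ)
  simpa using this

lemma cycle_dist_chord (hconn : G.Connected) {n : ℕ} [NeZero n] {c : ZMod n → W}
    (hcyc : IsCycle G n c) {a b : ℕ} (hab : a < b) (hbn : b < n) :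
    G.dist (c ((a : ℕ) : ZMod n)) (c ((b : ℕ) : ZMod n)) ≤ b - a ∧
    G.dist (c ((a : ℕ) : ZMod n)) (c ((b : ℕ) : ZMod n)) ≤ n - (b - a) := by
  constructor
  · have w := cycle_dist_le hconn hcyc ((a : ℕ) : ZMod n) (b - a)
    have e : ((a:ℕ) : ZMod n) + (((b - a :ℕ)) : ZMod n) = ((b:ℕ) : ZMod n) := by
      rw [← Nat.cast_add]
      congr 1
      omega
    rwa [e] at w
  · have w := cycle_dist_le hconn hcyc ((b : ℕ) : ZMod n) (n - (b - a))
    have e : ((b:ℕ) : ZMod n) + (((n - (b - a) :ℕ)) : ZMod n) = ((a:ℕ) : ZMod n) := by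
      rw [← Nat.cast_add]
      calc (((b + (n - (b - a)) : ℕ)) : ZMod n) = ((n + a : ℕ) : ZMod n) := by congr 1; omega
        _ = ((n : ℕ) : ZMod n) + ((a:ℕ) : ZMod n) := by push_cast; ring
        _ = ((a:ℕ) : ZMod n) := by rw [ZMod.natCast_self, zero_add]
    rw [e] at w
    rwa [SimpleGraph.dist_comm] at w

lemma circ_nat_min {n : ℕ} (hn : 0 < n) {m : ℕ} (hmn : m ≤ n) :
    circ n ((m : ℕ) : ℝ) = ((min m (n - m) : ℕ) : ℝ) := by
  have h := circ_int_min hn ((m : ℕ) : ℤ) (by positivity) (by exact_mod_cast hmn)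
  have e1 : (((m:ℕ):ℤ):ℝ) = ((m:ℕ):ℝ) := by push_cast; rfl
  rw [e1] at h
  rw [h]
  rw [Nat.cast_min, Nat.cast_sub hmn]

lemma HC_shortcut (hconn : G.Connected) {θ : ℕ}
    (hθ : ∀ (m : ℕ) (c' : ZMod m → W), 0 < m → IsCycle G m c' →
      IsIsometricCycle G m c' → m ≤ θ) :
    ∀ (n : ℕ) (c : ZMod n → W), θ + 3 < n → IsCycle G n c →
      ∃ a b : ℕ, a < b ∧ b < n ∧
        (n - (b - a)) + G.dist (c ((a : ℕ) : ZMod n)) (c ((b : ℕ) : ZMod n)) < n ∧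
        (b - a) + G.dist (c ((a : ℕ) : ZMod n)) (c ((b : ℕ) : ZMod n)) < n ∧
        2 ^ ((n - (b - a)) + G.dist (c ((a : ℕ) : ZMod n)) (c ((b : ℕ) : ZMod n))) +
          2 ^ ((b - a) + G.dist (c ((a : ℕ) : ZMod n)) (c ((b : ℕ) : ZMod n))) ≤ 2 ^ n := by
  intro n c hn hcyc
  haveI : NeZero n := ⟨by omega⟩
  have hn0 : 0 < n := by omega
  obtain ⟨x, y, hne⟩ := chord_of_shortcut hθ (by omega) (by omega) hcyc
  rw [circ_natval hn0, c_natval c x, c_natval c y] at hne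
  set a' : ℕ := ((x : ZMod n)).val with ha'
  set b' : ℕ := ((y : ZMod n)).val with hb'
  have ha'n : a' < n := ZMod.val_lt _
  have hb'n : b' < n := ZMod.val_lt _
  have main : ∀ a b : ℕ, a < b → b < n →
      ((G.dist (c ((a : ℕ) : ZMod n)) (c ((b : ℕ) : ZMod n)) : ℕ) : ℝ)
        ≠ circ n (((a:ℕ):ℝ) - ((b:ℕ):ℝ)) →
      ∃ a₀ b₀ : ℕ, a₀ < b₀ ∧ b₀ < n ∧
        (n - (b₀ - a₀)) + G.dist (c ((a₀ : ℕ) : ZMod n)) (c ((b₀ : ℕ) : ZMod n)) < n ∧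
        (b₀ - a₀) + G.dist (c ((a₀ : ℕ) : ZMod n)) (c ((b₀ : ℕ) : ZMod n)) < n ∧
        2 ^ ((n - (b₀ - a₀)) + G.dist (c ((a₀ : ℕ) : ZMod n)) (c ((b₀ : ℕ) : ZMod n))) +
          2 ^ ((b₀ - a₀) + G.dist (c ((a₀ : ℕ) : ZMod n)) (c ((b₀ : ℕ) : ZMod n))) ≤ 2 ^ n := by
    intro a b hab hbn hne'
    set D : ℕ := G.dist (c ((a : ℕ) : ZMod n)) (c ((b : ℕ) : ZMod n)) with hD
    set m : ℕ := b - a with hm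
    have hmn' : m ≤ n := by omega
    have hcast : ((m:ℕ):ℝ) = ((b:ℕ):ℝ) - ((a:ℕ):ℝ) := by
      rw [hm, Nat.cast_sub hab.le]
    have hcirc : circ n (((a:ℕ):ℝ) - ((b:ℕ):ℝ)) = ((min m (n - m) : ℕ) : ℝ) := by
      have e1 : ((a:ℕ):ℝ) - ((b:ℕ):ℝ) = -(((m:ℕ):ℝ)) := by rw [hcast]; ring
      rw [e1, circ_neg hn0, circ_nat_min hn0 hmn']
    rw [hcirc] at hne'
    have hDne : D ≠ min m (n - m) := by
      intro h
      exact hne' (by exact_mod_cast congrArg (fun z : ℕ => (z:ℝ)) h)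
    obtain ⟨hD1, hD2⟩ := cycle_dist_chord hconn hcyc hab hbn
    rw [← hD, ← hm] at hD1 hD2
    have hDlt : D < min m (n - m) := by omega
    refine ⟨a, b, hab, hbn, ?_, ?_, ?_⟩
    · rw [← hD, ← hm]; omega
    · rw [← hD, ← hm]; omega
    · rw [← hD, ← hm]
      have p1 : 2 ^ (n - m + D) ≤ 2 ^ (n - 1) := Nat.pow_le_pow_right (by norm_num) (by omega)
      have p2 : 2 ^ (m + D) ≤ 2 ^ (n - 1) := Nat.pow_le_pow_right (by norm_num) (by omega)
      have e : 2 ^ (n - 1) + 2 ^ (n - 1) = 2 ^ n := by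
        have en : n - 1 + 1 = n := by omega
        calc 2 ^ (n - 1) + 2 ^ (n - 1) = 2 ^ (n - 1) * 2 := by ring
          _ = 2 ^ (n - 1 + 1) := by rw [pow_succ]
          _ = 2 ^ n := by rw [en]
      omega
  rcases lt_trichotomy a' b' with h | h | h
  · exact main a' b' h hb'n hne
  · exfalso
    rw [h] at hne
    have e0 : ((b':ℕ):ℝ) - ((b':ℕ):ℝ) = 0 := by ring
    rw [e0, circ_zero_self hn0] at hne
    have : G.dist (c ((b' : ℕ) : ZMod n)) (c ((b' : ℕ) : ZMod n)) = 0 := by simp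
    rw [this] at hne
    simp at hne
  · refine main b' a' h ha'n ?_
    rw [SimpleGraph.dist_comm]
    have e1 : circ n (((b':ℕ):ℝ) - ((a':ℕ):ℝ)) = circ n (((a':ℕ):ℝ) - ((b':ℕ):ℝ)) := by
      rw [show ((b':ℕ):ℝ) - ((a':ℕ):ℝ) = -(((a':ℕ):ℝ) - ((b':ℕ):ℝ)) from by ring,
        circ_neg hn0]
    rw [e1]
    exact hne

lemma HC_strong (hconn : G.Connected) {θ : ℕ} {ξ : ℝ} (hξ0 : 0 < ξ) (hξ1 : ξ < 1)
    (hθ : ∀ (m : ℕ) (c' : ZMod m → W), 0 < m → IsCycle G m c' →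
      IsAlmostIsometricCycle G m c' ξ → m ≤ θ)
    (θ₃ : ℕ) (hθ₃θ : θ ≤ θ₃) (hθ₃8 : 8 ≤ θ₃) (d : ℕ)
    (hari : ∀ nr : ℝ, (θ₃:ℝ) < nr →
      2 * ((1+ξ)/2 * nr + 2)^d ≤ nr^d ∧ (1+ξ)/2 * nr + 2 < nr) :
    ∀ (n : ℕ) (c : ZMod n → W), θ₃ < n → IsCycle G n c →
      ∃ a b : ℕ, a < b ∧ b < n ∧
        (n - (b - a)) + G.dist (c ((a : ℕ) : ZMod n)) (c ((b : ℕ) : ZMod n)) < n ∧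
        (b - a) + G.dist (c ((a : ℕ) : ZMod n)) (c ((b : ℕ) : ZMod n)) < n ∧
        ((n - (b - a)) + G.dist (c ((a : ℕ) : ZMod n)) (c ((b : ℕ) : ZMod n))) ^ d +
          ((b - a) + G.dist (c ((a : ℕ) : ZMod n)) (c ((b : ℕ) : ZMod n))) ^ d ≤ n ^ d := by
  intro n c hn hcyc
  haveI : NeZero n := ⟨by omega⟩
  have hn0 : 0 < n := by omega
  have hnr : (θ₃:ℝ) < (n:ℝ) := by exact_mod_cast hn
  obtain ⟨hari1, hari2⟩ := hari (n:ℝ) hnr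
  obtain ⟨x, y, hcge, hdlt⟩ := chord_of_strong hθ (by omega) hcyc
  rw [circ_natval hn0] at hcge
  rw [c_natval c x, c_natval c y] at hdlt
  set a' : ℕ := ((x : ZMod n)).val with ha'
  set b' : ℕ := ((y : ZMod n)).val with hb'
  have ha'n : a' < n := ZMod.val_lt _
  have hb'n : b' < n := ZMod.val_lt _
  have main : ∀ a b : ℕ, a < b → b < n →
      (n:ℝ)/2 - 2 ≤ circ n (((a:ℕ):ℝ) - ((b:ℕ):ℝ)) →
      ((G.dist (c ((a : ℕ) : ZMod n)) (c ((b : ℕ) : ZMod n)) : ℕ) : ℝ) < ξ * ((n:ℝ)/2) →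
      ∃ a₀ b₀ : ℕ, a₀ < b₀ ∧ b₀ < n ∧
        (n - (b₀ - a₀)) + G.dist (c ((a₀ : ℕ) : ZMod n)) (c ((b₀ : ℕ) : ZMod n)) < n ∧
        (b₀ - a₀) + G.dist (c ((a₀ : ℕ) : ZMod n)) (c ((b₀ : ℕ) : ZMod n)) < n ∧
        ((n - (b₀ - a₀)) + G.dist (c ((a₀ : ℕ) : ZMod n)) (c ((b₀ : ℕ) : ZMod n))) ^ d +
          ((b₀ - a₀) + G.dist (c ((a₀ : ℕ) : ZMod n)) (c ((b₀ : ℕ) : ZMod n))) ^ d ≤ n ^ d := by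
    intro a b hab hbn hcge' hdlt'
    set D : ℕ := G.dist (c ((a : ℕ) : ZMod n)) (c ((b : ℕ) : ZMod n)) with hD
    set m : ℕ := b - a with hm
    have hmn' : m ≤ n := by omega
    have hcast : ((m:ℕ):ℝ) = ((b:ℕ):ℝ) - ((a:ℕ):ℝ) := by
      rw [hm, Nat.cast_sub hab.le]
    have hcirc : circ n (((a:ℕ):ℝ) - ((b:ℕ):ℝ)) = ((min m (n - m) : ℕ) : ℝ) := by
      have e1 : ((a:ℕ):ℝ) - ((b:ℕ):ℝ) = -(((m:ℕ):ℝ)) := by rw [hcast]; ring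
      rw [e1, circ_neg hn0, circ_nat_min hn0 hmn']
    rw [hcirc] at hcge'
    -- real bounds
    have hmge : (n:ℝ)/2 - 2 ≤ ((m:ℕ):ℝ) ∧ (n:ℝ)/2 - 2 ≤ ((n - m:ℕ):ℝ) := by
      constructor
      · calc (n:ℝ)/2 - 2 ≤ ((min m (n-m) : ℕ):ℝ) := hcge'
          _ ≤ ((m:ℕ):ℝ) := by exact_mod_cast Nat.cast_le.mpr (min_le_left _ _)
      · calc (n:ℝ)/2 - 2 ≤ ((min m (n-m) : ℕ):ℝ) := hcge'
          _ ≤ ((n - m:ℕ):ℝ) := by exact_mod_cast Nat.cast_le.mpr (min_le_right _ _)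
    have hsubcast : ((n - m : ℕ):ℝ) = (n:ℝ) - ((m:ℕ):ℝ) := Nat.cast_sub hmn'
    have hmub : ((m:ℕ):ℝ) ≤ (n:ℝ)/2 + 2 := by
      rw [hsubcast] at hmge
      linarith [hmge.2]
    have hnmub : ((n - m : ℕ):ℝ) ≤ (n:ℝ)/2 + 2 := by
      rw [hsubcast]
      linarith [hmge.1]
    -- piece bounds (real)
    have hp1 : (((n - m + D : ℕ)):ℝ) ≤ (1+ξ)/2 * (n:ℝ) + 2 := by
      push_cast
      push_cast at hnmub hdlt'
      rw [hsubcast]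
      rw [hsubcast] at hnmub
      nlinarith
    have hp2 : (((m + D : ℕ)):ℝ) ≤ (1+ξ)/2 * (n:ℝ) + 2 := by
      push_cast
      push_cast at hmub hdlt'
      nlinarith
    have hlt1 : n - m + D < n := by
      have : (((n - m + D : ℕ)):ℝ) < (n:ℝ) := lt_of_le_of_lt hp1 hari2
      exact_mod_cast this
    have hlt2 : m + D < n := by
      have : (((m + D : ℕ)):ℝ) < (n:ℝ) := lt_of_le_of_lt hp2 hari2
      exact_mod_cast this
    have hsum : (n - m + D) ^ d + (m + D) ^ d ≤ n ^ d := by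
      have q1 : (((n - m + D : ℕ)):ℝ) ^ d ≤ ((1+ξ)/2 * (n:ℝ) + 2) ^ d :=
        pow_le_pow_left₀ (by positivity) hp1 d
      have q2 : (((m + D : ℕ)):ℝ) ^ d ≤ ((1+ξ)/2 * (n:ℝ) + 2) ^ d :=
        pow_le_pow_left₀ (by positivity) hp2 d
      have : (((n - m + D : ℕ)):ℝ) ^ d + (((m + D : ℕ)):ℝ) ^ d ≤ ((n:ℝ)) ^ d := by
        calc (((n - m + D : ℕ)):ℝ) ^ d + (((m + D : ℕ)):ℝ) ^ d
            ≤ 2 * ((1+ξ)/2 * (n:ℝ) + 2) ^ d := by linarith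
          _ ≤ ((n:ℝ)) ^ d := hari1
      exact_mod_cast this
    exact ⟨a, b, hab, hbn, by rw [← hD, ← hm]; omega, by rw [← hD, ← hm]; omega,
      by rw [← hD, ← hm]; convert hsum using 2 <;> omega⟩
  rcases lt_trichotomy a' b' with h | h | h
  · exact main a' b' h hb'n hcge hdlt
  · exfalso
    rw [h] at hcge
    have e0 : ((b':ℕ):ℝ) - ((b':ℕ):ℝ) = 0 := by ring
    rw [e0, circ_zero_self hn0] at hcge
    have : (8:ℝ) ≤ (n:ℝ) := by
      have : (8:ℕ) ≤ n := by omega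
      exact_mod_cast this
    linarith
  · refine main b' a' h ha'n ?_ ?_
    · have e1 : circ n (((b':ℕ):ℝ) - ((a':ℕ):ℝ)) = circ n (((a':ℕ):ℝ) - ((b':ℕ):ℝ)) := by
        rw [show ((b':ℕ):ℝ) - ((a':ℕ):ℝ) = -(((a':ℕ):ℝ) - ((b':ℕ):ℝ)) from by ring,
          circ_neg hn0]
      rw [e1]
      exact hcge
    · rw [SimpleGraph.dist_comm]
      exact hdlt

end Instantiations

/-- Corollary `isoper`.  Let `G` be a group.  If `G` is shortcut then it
admits a finite presentation with an exponential isoperimetric function `n ↦ A·Bⁿ` (for some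
constants `A, B > 0`).  If `G` is strongly shortcut then it admits a finite presentation with
a polynomial isoperimetric function `n ↦ A·n^d` (for some constants `A, d > 0`). -/
theorem cor_isoper (Gp : Type) [Group Gp] :
    (ShortcutGroup Gp →
      ∃ (k : ℕ) (rels : Finset (FreeGroup (Fin k))) (A B : ℕ),
        Nonempty (Gp ≃* PresentedGroup ((rels : Set (FreeGroup (Fin k))))) ∧
        0 < A ∧ 0 < B ∧ IsIsoperimetricFn rels (fun N => A * B ^ N)) ∧
    (StronglyShortcutGroup Gp →
      ∃ (k : ℕ) (rels : Finset (FreeGroup (Fin k))) (A d : ℕ),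
        Nonempty (Gp ≃* PresentedGroup ((rels : Set (FreeGroup (Fin k))))) ∧
        0 < A ∧ 0 < d ∧ IsIsoperimetricFn rels (fun N => A * N ^ d)) := by
  constructor
  · rintro ⟨V, G, ρ, hconn, hact, hproper, hcc, θ, hθ⟩
    have HC := HC_shortcut hconn hθ
    obtain ⟨k, rels, Q, hQ1, hiso, hA⟩ :=
      main_construction hconn hact hproper hcc (θ + 3) (by omega) (fun m => 2 ^ m)
        (fun m _ _ => Nat.one_le_pow _ _ (by norm_num))
        (fun a b hab => Nat.pow_le_pow_right (by norm_num) hab) HC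
    refine ⟨k, rels, 2, 2 ^ Q, hiso, by norm_num, by positivity, ?_⟩
    intro N w hlen hmem
    have h := hA w hmem
    set N₀ := w.toWord.length with hN₀
    have hb : N₀ + 2 ^ (Q * N₀) ≤ 2 * (2 ^ Q) ^ N := by
      have h1 : N₀ ≤ 2 ^ (Q * N) := by
        calc N₀ ≤ N := hlen
          _ ≤ 2 ^ N := (Nat.lt_two_pow_self (n := N)).le
          _ ≤ 2 ^ (Q * N) := Nat.pow_le_pow_right (by norm_num)
              (Nat.le_mul_of_pos_left N (by omega))
      have h2 : 2 ^ (Q * N₀) ≤ 2 ^ (Q * N) :=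
        Nat.pow_le_pow_right (by norm_num) (Nat.mul_le_mul_left _ hlen)
      have e : (2 ^ Q) ^ N = 2 ^ (Q * N) := by rw [← pow_mul]
      rw [e]
      omega
    exact areaLe_mono hb h
  · rintro ⟨V, G, ρ, hconn, hact, hproper, hcc, θ, ξ, hξ0, hξ1, hθ⟩
    set ν : ℝ := (3 + ξ)/4 with hν
    have hν0 : 0 < ν := by rw [hν]; linarith
    have hν1 : ν < 1 := by rw [hν]; linarith
    obtain ⟨d', hd'⟩ := exists_pow_lt_of_lt_one (by norm_num : (0:ℝ) < 1/2) hν1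
    set d := max d' 1 with hd
    have hd1 : 1 ≤ d := le_max_right _ _
    have hνd : ν ^ d < 1/2 :=
      lt_of_le_of_lt (pow_le_pow_of_le_one hν0.le hν1.le (le_max_left _ _)) hd'
    set θ₃ : ℕ := θ + ⌈(8:ℝ)/(1-ξ)⌉₊ + 8 with hθ₃
    have hceil : (8:ℝ)/(1-ξ) ≤ (⌈(8:ℝ)/(1-ξ)⌉₊ : ℝ) := Nat.le_ceil _
    have h1ξ : (0:ℝ) < 1 - ξ := by linarith
    have hari : ∀ nr : ℝ, (θ₃:ℝ) < nr →
        2 * ((1+ξ)/2 * nr + 2)^d ≤ nr^d ∧ (1+ξ)/2 * nr + 2 < nr := by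
      intro nr hnr
      have hθ₃r : ((⌈(8:ℝ)/(1-ξ)⌉₊ : ℕ) : ℝ) ≤ (θ₃:ℝ) := by
        rw [hθ₃]
        push_cast
        have : (0:ℝ) ≤ (θ:ℝ) := Nat.cast_nonneg θ
        linarith
      have hnrpos : 0 < nr := by
        have : (0:ℝ) ≤ (θ₃:ℝ) := Nat.cast_nonneg θ₃
        linarith
      have hnr8 : (8:ℝ)/(1-ξ) ≤ nr := by linarith
      have hμν : (1+ξ)/2 * nr + 2 ≤ ν * nr := by
        have key : (1-ξ)/4 * nr ≥ 2 := by
          have h4 : (0:ℝ) < (1-ξ)/4 := by positivity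
          have := mul_le_mul_of_nonneg_left hnr8 h4.le
          have e : (1-ξ)/4 * ((8:ℝ)/(1-ξ)) = 2 := by field_simp; ring
          linarith
        rw [hν]
        nlinarith
      constructor
      · have hb0 : (0:ℝ) ≤ (1+ξ)/2 * nr + 2 := by positivity
        have q := pow_le_pow_left₀ hb0 hμν d
        have e : (ν * nr)^d = ν^d * nr^d := mul_pow _ _ _
        have hnrd : (0:ℝ) ≤ nr^d := by positivity
        rw [e] at q
        nlinarith
      · have hlt : ν * nr < nr := by nlinarith
        linarith
    have HC := HC_strong hconn hξ0 hξ1 hθ θ₃ (by omega) (by omega) d hari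
    obtain ⟨k, rels, Q, hQ1, hiso, hA⟩ :=
      main_construction hconn hact hproper hcc θ₃ (by omega) (fun m => m ^ d)
        (fun m hm _ => Nat.one_le_pow _ _ hm)
        (fun a b hab => Nat.pow_le_pow_left hab d) HC
    refine ⟨k, rels, Q ^ d + 1, d, hiso, by positivity, by omega, ?_⟩
    intro N w hlen hmem
    have h := hA w hmem
    set N₀ := w.toWord.length with hN₀
    have hb : N₀ + (Q * N₀) ^ d ≤ (Q ^ d + 1) * N ^ d := by
      rcases Nat.eq_zero_or_pos N with rfl | hN
      · have hz : N₀ = 0 := by omega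
        rw [hz]
        have hzp : (0:ℕ) ^ d = 0 := zero_pow (by omega : d ≠ 0)
        simp [hzp]
      · have h1 : N₀ ≤ N ^ d := le_trans hlen (Nat.le_self_pow (by omega) N)
        have h2 : (Q * N₀)^d ≤ (Q * N)^d := Nat.pow_le_pow_left (Nat.mul_le_mul_left _ hlen) d
        have e : (Q*N)^d = Q^d * N^d := mul_pow _ _ _
        calc N₀ + (Q*N₀)^d ≤ N^d + (Q*N)^d := by omega
          _ = N^d + Q^d * N^d := by rw [e]
          _ = (Q^d+1) * N^d := by ring
    exact areaLe_mono hb h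

end ShortcutGraphs
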